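/- arXiv:2308.06340 — 6 statements merged into one kernel-verified Lean document; each statement's English description precedes it below -/
import Mathlib

section
/- For every m ≥ 1, the coefficient matrices of the logarithm of the symmetric square of φ are given explicitly as follows. Let B_0 = [[θ,κ_1,κ_2],[0,θ,0],[0,0,θ]], B_1 = [[0,0,0],[κ_1,κ_2,0],[0,κ_1,0]], B_2 = κ_2·E_{31} ∈ Mat_3(K), so that (Sym²φ)_t = B_0 + B_1τ + B_2τ² is the symmetric square t-module of φ. Suppose (C_m)_{m≥0} is a sequence in Mat_3(K) with C_0 = I_3 and C_m = 0 for m < 0 satisfying the logarithm recursion B_0·C_m = C_m·B_0^{[m]} + C_{m-1}·B_1^{[m-1]} + C_{m-2}·B_2^{[m-2]} for all m ≥ 1 (so that Log_{Sym²φ}(z) = Σ_m C_m z^{[m]}). Then for every m ≥ 1, C_m = D′·𝐋_m·J, where D′ is the 3×4 matrix [[1,0,0,0],[0,1/2,1/2,0],[0,−κ_1/(2κ_2),−κ_1/(2κ_2),1]] and J is the 4×3 matrix [[1,0,0],[0,1,0],[0,1,0],[0,0,1]] (which repeats the second coordinate, corresponding to substituting (z_1,z_2,z_2,z_3)). -/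
/-!
Since `θ ≠ θ^{q^m}` for `m ≥ 1`, the matrices `B₀` and `B₀^{[m]}` are scalar-plus-nilpotent with
distinct scalars, so `X ↦ B₀ X - X B₀^{[m]}` is injective and the logarithm recursion determines
`C_m` from `C_{m-1}` and `C_{m-2}`. It therefore suffices to check that the explicit matrices
`D′ 𝐋_m J` satisfy the same recursion; after expanding `β_m`, `β̃_{m-1}`, `β′_m` by their
recursions this is an identity of rational functions, entry by entry.

The formula is false at `m = 0` as it stands, but becomes true (it gives `1`) once `β̃_{-2}` is
set to `(θ - θ^q)/κ₂`, the value that makes the `β̃`-recursion hold at `m = 0`; for `m < 0` it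
gives `0`. With this one change a single induction covers all `m`.
-/

open Matrix

theorem RatFunc.X_ne_X_pow {K : Type*} [Field K] {n : ℕ} (hn : n ≠ 1) :
    (RatFunc.X : RatFunc K) ≠ RatFunc.X ^ n := by
  rw [← RatFunc.algebraMap_X, ← map_pow, Ne,
    (IsFractionRing.injective (Polynomial K) (RatFunc K)).eq_iff]
  intro h
  apply hn
  simpa using (congrArg Polynomial.natDegree h).symm

theorem eq_of_sylvester_recursion {A : Type*} [Ring A] {X Y : ℤ → A} (a : A)
    (a' r₁ r₂ : ℤ → A) (hinj : ∀ m, 1 ≤ m → ∀ z, a * z = z * a' m → z = 0)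
    (hX : ∀ m, 1 ≤ m → a * X m = X m * a' m + X (m - 1) * r₁ m + X (m - 2) * r₂ m)
    (hY : ∀ m, 1 ≤ m → a * Y m = Y m * a' m + Y (m - 1) * r₁ m + Y (m - 2) * r₂ m)
    (hle : ∀ m ≤ 0, X m = Y m) : X = Y := by
  suffices h : ∀ k : ℕ, ∀ m : ℤ, m ≤ k → X m = Y m from funext fun m => h m.toNat m (by omega)
  intro k
  induction k with
  | zero => exact fun m hm => hle m hm
  | succ k ih =>
    intro m hm
    rcases le_or_gt m k with hmk | hmk
    · exact ih m hmk
    have hm1 : 1 ≤ m := by omega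
    refine sub_eq_zero.1 (hinj m hm1 _ ?_)
    rw [mul_sub, sub_mul, hX m hm1, hY m hm1, ih (m - 1) (by omega), ih (m - 2) (by omega)]
    abel

theorem Function.update_neg_two_recursion {F : Type*} [Field F] {s a d : ℤ → F} {b : F}
    (hb : b ≠ 0) (hd : d 0 ≠ 0) (hneg : ∀ m < 0, s m = 0) (h0 : s 0 = 1)
    (hrec : ∀ m, 1 ≤ m → s m = (a m * s (m - 1) + b * s (m - 2)) / d m) (m : ℤ) (hm : 0 ≤ m) :
    Function.update s (-2) (d 0 / b) m =
      (a m * Function.update s (-2) (d 0 / b) (m - 1)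
        + b * Function.update s (-2) (d 0 / b) (m - 2)) / d m := by
  rcases hm.eq_or_lt with rfl | hm
  · simp [h0, hneg]
    field_simp
  · rw [Function.update_of_ne (by omega), Function.update_of_ne (by omega),
      Function.update_of_ne (by omega)]
    exact hrec m hm

theorem Matrix.eq_zero_of_mul_eq_mul_of_isNilpotent_sub {F n : Type*} [Field F] [Fintype n]
    [DecidableEq n] {A A' Z : Matrix n n F} {c c' : F} (hcc' : c ≠ c')
    (hA : IsNilpotent (A - c • 1)) (hA' : IsNilpotent (A' - c' • 1)) (hZ : A * Z = Z * A') :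
    Z = 0 := by
  set T : Module.End F (Matrix n n F) :=
    LinearMap.mulRight F (A' - c' • 1) - LinearMap.mulLeft F (A - c • 1)
  have hT : IsNilpotent T := Commute.isNilpotent_sub (LinearMap.commute_mulLeft_right _ _).symm
    ((LinearMap.isNilpotent_mulRight_iff F _).2 hA') ((LinearMap.isNilpotent_mulLeft_iff F _).2 hA)
  have hunit : IsUnit (algebraMap F (Module.End F (Matrix n n F)) (c - c') + -T) :=
    hT.neg.isUnit_add_left_of_commute ((sub_ne_zero.2 hcc').isUnit.map _)
      (Algebra.commutes _ _).symm
  have hZker : (algebraMap F (Module.End F (Matrix n n F)) (c - c') + -T) Z = 0 := by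
    simp only [T, LinearMap.add_apply, LinearMap.neg_apply, LinearMap.sub_apply,
      LinearMap.mulRight_apply, LinearMap.mulLeft_apply, Module.algebraMap_end_apply]
    rw [sub_mul, mul_sub, hZ]
    simp only [sub_smul, smul_mul_assoc, one_mul, mul_smul_comm, mul_one]
    abel
  exact (Module.End.isUnit_iff _).1 hunit |>.1 (hZker.trans (map_zero _).symm)

namespace SymSquareLog

variable {F : Type*} [Field F]

def tCoeff0 (θ k1 k2 : F) : Matrix (Fin 3) (Fin 3) F := !![θ, k1, k2; 0, θ, 0; 0, 0, θ]
def tCoeff1 (k1 k2 : F) : Matrix (Fin 3) (Fin 3) F := !![0, 0, 0; k1, k2, 0; 0, k1, 0]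
def tCoeff2 (k2 : F) : Matrix (Fin 3) (Fin 3) F := !![0, 0, 0; 0, 0, 0; k2, 0, 0]

theorem isNilpotent_tCoeff0_sub (θ k1 k2 : F) : IsNilpotent (tCoeff0 θ k1 k2 - θ • 1) :=
  ⟨2, by
    ext i j
    fin_cases i <;> fin_cases j <;> simp [tCoeff0, sq, mul_apply, Fin.sum_univ_three]⟩

section map
variable (f : F → F) (hf : f 0 = 0)
include hf

theorem tCoeff0_map (θ k1 k2 : F) : (tCoeff0 θ k1 k2).map f = tCoeff0 (f θ) (f k1) (f k2) := by
  ext i j; fin_cases i <;> fin_cases j <;> simp [tCoeff0, hf]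

theorem tCoeff1_map (k1 k2 : F) : (tCoeff1 k1 k2).map f = tCoeff1 (f k1) (f k2) := by
  ext i j; fin_cases i <;> fin_cases j <;> simp [tCoeff1, hf]

theorem tCoeff2_map (k2 : F) : (tCoeff2 k2).map f = tCoeff2 (f k2) := by
  ext i j; fin_cases i <;> fin_cases j <;> simp [tCoeff2, hf]

end map

def closedForm (d k1 k2 K L1 L2 L1' L2' Lt0 Lt1 Lt2 : F) : Matrix (Fin 3) (Fin 3) F :=
  !![L1 + d * L1', K * L1' + 2 * k2 * L2', k2 * L1';
     d * Lt1 / k2, Lt0 + 2 * Lt2 + K * Lt1 / k2, Lt1;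
     d * L1 / k2 - k1 * d * Lt1 / k2 ^ 2,
       2 * L2 + K * L1 / k2 - k1 * Lt0 / k2 - 2 * k1 * Lt2 / k2 - k1 * K * Lt1 / k2 ^ 2,
       L1 - k1 * Lt1 / k2]

theorem mul_mul_eq_closedForm (d k1 k2 K L1 L2 L1' L2' Lt0 Lt1 Lt2 : F) (h2 : (2 : F) ≠ 0)
    (hk2 : k2 ≠ 0) :
    !![(1 : F), 0, 0, 0; 0, 1 / 2, 1 / 2, 0; 0, -(k1 / (2 * k2)), -(k1 / (2 * k2)), 1] *
      !![L1 + d * L1', k2 * L2', K * L1' + k2 * L2', k2 * L1';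
         d * Lt1 / k2, Lt0 + Lt2, K * Lt1 / k2 + Lt2, Lt1;
         d * Lt1 / k2, Lt2, Lt0 + K * Lt1 / k2 + Lt2, Lt1;
         d * L1 / k2, L2, K * L1 / k2 + L2, L1] *
      !![(1 : F), 0, 0; 0, 1, 0; 0, 1, 0; 0, 0, 1] =
      closedForm d k1 k2 K L1 L2 L1' L2' Lt0 Lt1 Lt2 := by
  ext i j
  fin_cases i <;> fin_cases j <;>
    simp [closedForm, Matrix.mul_apply, Fin.sum_univ_four] <;>
    field_simp <;> ring

section logCoeff
variable (θ k1 k2 c : F) (θtw Ktw β βt β' : ℤ → F)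

/-- `θtw m` and `Ktw m` stand for the twists `θ^{q^m}` and `κ₁^{q^m}`, and `c` for `θ - θ^q`. -/
def logCoeff (m : ℤ) : Matrix (Fin 3) (Fin 3) F :=
  closedForm (θ - θtw m) k1 k2 (Ktw m) (β m ^ 2) (β m * β (m - 1)) (2 * β m * β' m)
    (β' m * β (m - 1) + β m * β' (m - 1))
    (k2 * (β m * βt (m - 2) - β (m - 1) * βt (m - 1)) / c)
    (k2 * (β m * βt (m - 1)) / c) (k2 * (β (m - 1) * βt (m - 1)) / c)

variable {θ k1 k2 c θtw Ktw β βt β'}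

theorem logCoeff_of_neg (hβ : ∀ m < 0, β m = 0) (hβ' : ∀ m < 0, β' m = 0) {m : ℤ} (hm : m < 0) :
    logCoeff θ k1 k2 c θtw Ktw β βt β' m = 0 := by
  ext i j
  fin_cases i <;> fin_cases j <;>
    simp [logCoeff, closedForm, hβ m hm, hβ (m - 1) (by omega), hβ' m hm, hβ' (m - 1) (by omega)]

theorem logCoeff_zero (hk2 : k2 ≠ 0) (hc : c ≠ 0) (hθtw : θtw 0 = θ) (hKtw : Ktw 0 = k1)
    (hβneg : ∀ m < 0, β m = 0) (hβ0 : β 0 = 1) (hβ' : ∀ m ≤ 0, β' m = 0)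
    (hβt1 : βt (-1) = 0) (hβt2 : βt (-2) = c / k2) :
    logCoeff θ k1 k2 c θtw Ktw β βt β' 0 = 1 := by
  have hLt0 : k2 * (c / k2) / c = 1 := by field_simp
  ext i j
  fin_cases i <;> fin_cases j <;>
    simp [logCoeff, closedForm, hθtw, hKtw, hβneg, hβ0, hβ', hβt1, hβt2, hLt0]

theorem tCoeff0_mul_logCoeff (m : ℤ) (hd : θ - θtw m ≠ 0) (hk2 : k2 ≠ 0)
    (hβ : β m = (Ktw (m - 1) * β (m - 1) + k2 * β (m - 2)) / (θ - θtw m))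
    (hβt : βt (m - 1) = (Ktw (m - 1) * βt (m - 2) + k2 * βt (m - 3)) / (θ - θtw m))
    (hβ' : β' m = (Ktw (m - 1) * β' (m - 1) + k2 * β' (m - 2) - β m) / (θ - θtw m)) :
    tCoeff0 θ k1 k2 * logCoeff θ k1 k2 c θtw Ktw β βt β' m =
      logCoeff θ k1 k2 c θtw Ktw β βt β' m * tCoeff0 (θtw m) (Ktw m) k2
      + logCoeff θ k1 k2 c θtw Ktw β βt β' (m - 1) * tCoeff1 (Ktw (m - 1)) k2
      + logCoeff θ k1 k2 c θtw Ktw β βt β' (m - 2) * tCoeff2 k2 := by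
  simp only [logCoeff, show m - 1 - 1 = m - 2 by ring, show m - 1 - 2 = m - 3 by ring,
    show m - 2 - 1 = m - 3 by ring]
  rw [hβ', hβt, hβ]
  ext i j
  fin_cases i <;> fin_cases j <;>
    simp [closedForm, tCoeff0, tCoeff1, tCoeff2, Matrix.mul_apply, Fin.sum_univ_three] <;>
    field_simp <;> ring

theorem eq_logCoeff_of_recursion (hk2 : k2 ≠ 0) (hc : c ≠ 0) (hθtw0 : θtw 0 = θ)
    (hKtw0 : Ktw 0 = k1) (hθtw : ∀ m, 1 ≤ m → θ - θtw m ≠ 0)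
    (hβneg : ∀ m < 0, β m = 0) (hβ0 : β 0 = 1)
    (hβrec : ∀ m, 1 ≤ m → β m = (Ktw (m - 1) * β (m - 1) + k2 * β (m - 2)) / (θ - θtw m))
    (hβt1 : βt (-1) = 0) (hβt2 : βt (-2) = c / k2)
    (hβtrec : ∀ m, 0 ≤ m → βt m = (Ktw m * βt (m - 1) + k2 * βt (m - 2)) / (θ - θtw (m + 1)))
    (hβ'nonpos : ∀ m ≤ 0, β' m = 0)
    (hβ'rec : ∀ m, 1 ≤ m →
      β' m = (Ktw (m - 1) * β' (m - 1) + k2 * β' (m - 2) - β m) / (θ - θtw m))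
    {X : ℤ → Matrix (Fin 3) (Fin 3) F} (hX0 : X 0 = 1) (hXneg : ∀ m < 0, X m = 0)
    (hXrec : ∀ m, 1 ≤ m → tCoeff0 θ k1 k2 * X m = X m * tCoeff0 (θtw m) (Ktw m) k2
      + X (m - 1) * tCoeff1 (Ktw (m - 1)) k2 + X (m - 2) * tCoeff2 k2) :
    X = logCoeff θ k1 k2 c θtw Ktw β βt β' := by
  refine eq_of_sylvester_recursion (tCoeff0 θ k1 k2) (fun m => tCoeff0 (θtw m) (Ktw m) k2)
    (fun m => tCoeff1 (Ktw (m - 1)) k2) (fun _ => tCoeff2 k2)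
    (fun m hm z hz => eq_zero_of_mul_eq_mul_of_isNilpotent_sub (sub_ne_zero.1 (hθtw m hm))
      (isNilpotent_tCoeff0_sub _ _ _) (isNilpotent_tCoeff0_sub _ _ _) hz) hXrec ?_ ?_
  · intro m hm
    refine tCoeff0_mul_logCoeff m (hθtw m hm) hk2 (hβrec m hm) ?_ (hβ'rec m hm)
    simpa only [sub_add_cancel, show m - 1 - 1 = m - 2 by ring, show m - 1 - 2 = m - 3 by ring]
      using hβtrec (m - 1) (by omega)
  · intro m hm
    rcases hm.lt_or_eq with hm | rfl
    · rw [hXneg m hm, logCoeff_of_neg hβneg (fun m hm => hβ'nonpos m hm.le) hm]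
    · rw [hX0, logCoeff_zero hk2 hc hθtw0 hKtw0 hβneg hβ0 hβ'nonpos hβt1 hβt2]

end logCoeff

end SymSquareLog

open SymSquareLog

theorem logCoeff_symSquare_eq_general
    (p : ℕ) [Fact p.Prime] (hp : p ≠ 2)
    (Fq : Type) [Field Fq] [Fintype Fq] [CharP Fq p]
    (q : ℕ) (hq : q = Fintype.card Fq)
    (κ₂ : Fqˣ)
    (θ k1 k2 : RatFunc Fq)
    (hθ : θ = RatFunc.X)
    (hk2 : k2 = algebraMap (Polynomial Fq) (RatFunc Fq) (Polynomial.C (κ₂ : Fq)))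
    -- the logarithm coefficients β_m of φ
    (β : ℤ → RatFunc Fq)
    (hβneg : ∀ m : ℤ, m < 0 → β m = 0)
    (hβ0 : β 0 = 1)
    (hβrec : ∀ m : ℤ, 1 ≤ m →
      β m = (k1 ^ q ^ (m - 1).toNat * β (m - 1) + k2 * β (m - 2)) /
        (θ - θ ^ q ^ m.toNat))
    -- the values β̃_m at t = θ of the once-twisted El-Guindy–Papanikolas functions
    (βt : ℤ → RatFunc Fq)
    (hβtneg : ∀ m : ℤ, m < 0 → βt m = 0)
    (hβt0 : βt 0 = 1)
    (hβtrec : ∀ m : ℤ, 1 ≤ m →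
      βt m = (k1 ^ q ^ m.toNat * βt (m - 1) + k2 * βt (m - 2)) /
        (θ - θ ^ q ^ (m + 1).toNat))
    -- the values β′_m at t = θ of the t-derivatives
    (β' : ℤ → RatFunc Fq)
    (hβ'nonpos : ∀ m : ℤ, m ≤ 0 → β' m = 0)
    (hβ'rec : ∀ m : ℤ, 1 ≤ m →
      β' m = (k1 ^ q ^ (m - 1).toNat * β' (m - 1) + k2 * β' (m - 2) - β m) /
        (θ - θ ^ q ^ m.toNat))
    -- the coefficients of the auxiliary logarithm series
    (L1 L2 L1' L2' Lt0 Lt1 Lt2 : ℤ → RatFunc Fq)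
    (hL1 : ∀ m : ℤ, L1 m = β m ^ 2)
    (hL2 : ∀ m : ℤ, L2 m = β m * β (m - 1))
    (hL1' : ∀ m : ℤ, L1' m = 2 * β m * β' m)
    (hL2' : ∀ m : ℤ, L2' m = β' m * β (m - 1) + β m * β' (m - 1))
    (hLt0 : ∀ m : ℤ, Lt0 m = k2 * (β m * βt (m - 2) - β (m - 1) * βt (m - 1)) / (θ - θ ^ q))
    (hLt1 : ∀ m : ℤ, Lt1 m = k2 * (β m * βt (m - 1)) / (θ - θ ^ q))
    (hLt2 : ∀ m : ℤ, Lt2 m = k2 * (β (m - 1) * βt (m - 1)) / (θ - θ ^ q))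
    -- the matrix 𝐋_m
    (Lmat : ℤ → Matrix (Fin 4) (Fin 4) (RatFunc Fq))
    (hLmat : ∀ m : ℤ, Lmat m =
      !![L1 m + (θ - θ ^ q ^ m.toNat) * L1' m, k2 * L2' m,
           k1 ^ q ^ m.toNat * L1' m + k2 * L2' m, k2 * L1' m;
         (θ - θ ^ q ^ m.toNat) * Lt1 m / k2, Lt0 m + Lt2 m,
           k1 ^ q ^ m.toNat * Lt1 m / k2 + Lt2 m, Lt1 m;
         (θ - θ ^ q ^ m.toNat) * Lt1 m / k2, Lt2 m,
           Lt0 m + k1 ^ q ^ m.toNat * Lt1 m / k2 + Lt2 m, Lt1 m;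
         (θ - θ ^ q ^ m.toNat) * L1 m / k2, L2 m,
           k1 ^ q ^ m.toNat * L1 m / k2 + L2 m, L1 m])
    -- the t-action of the symmetric square t-module (Sym²φ)_t = B₀ + B₁τ + B₂τ²
    (B0 B1 B2 : Matrix (Fin 3) (Fin 3) (RatFunc Fq))
    (hB0 : B0 = !![θ, k1, k2; 0, θ, 0; 0, 0, θ])
    (hB1 : B1 = !![0, 0, 0; k1, k2, 0; 0, k1, 0])
    (hB2 : B2 = !![0, 0, 0; 0, 0, 0; k2, 0, 0])
    -- the coefficient matrices of Log_{Sym²φ}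
    (C : ℤ → Matrix (Fin 3) (Fin 3) (RatFunc Fq))
    (hC0 : C 0 = 1)
    (hCneg : ∀ m : ℤ, m < 0 → C m = 0)
    (hCrec : ∀ m : ℤ, 1 ≤ m →
      B0 * C m = C m * B0.map (· ^ q ^ m.toNat)
        + C (m - 1) * B1.map (· ^ q ^ (m - 1).toNat)
        + C (m - 2) * B2.map (· ^ q ^ (m - 2).toNat))
    (D' : Matrix (Fin 3) (Fin 4) (RatFunc Fq))
    (hD' : D' = !![1, 0, 0, 0;
                   0, 1 / 2, 1 / 2, 0;
                   0, -(k1 / (2 * k2)), -(k1 / (2 * k2)), 1])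
    (J : Matrix (Fin 4) (Fin 3) (RatFunc Fq))
    (hJ : J = !![1, 0, 0; 0, 1, 0; 0, 1, 0; 0, 0, 1]) :
    ∀ m : ℤ, 1 ≤ m → C m = D' * Lmat m * J := by
  have hq1 : 1 < q := hq ▸ Fintype.one_lt_card
  have h2 : (2 : RatFunc Fq) ≠ 0 := Ring.two_ne_zero (by rwa [ringChar.eq (RatFunc Fq) p])
  have hk2ne : k2 ≠ 0 := by simp [hk2]
  have hk2fix (n : ℕ) : k2 ^ q ^ n = k2 := by
    rw [hk2, ← map_pow, ← Polynomial.C_pow, hq, FiniteField.pow_card_pow]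
  have hθne (m : ℤ) (hm : 1 ≤ m) : θ - θ ^ q ^ m.toNat ≠ 0 :=
    sub_ne_zero.2 (hθ ▸ RatFunc.X_ne_X_pow (one_lt_pow₀ hq1 (by omega)).ne')
  have hdq : θ - θ ^ q ≠ 0 := by simpa using hθne 1 le_rfl
  have hpow (n : ℕ) : (· ^ q ^ n) (0 : RatFunc Fq) = 0 := zero_pow (by positivity)
  have hCE := eq_logCoeff_of_recursion (k1 := k1) (θtw := fun m => θ ^ q ^ m.toNat)
    (Ktw := fun m => k1 ^ q ^ m.toNat) (βt := Function.update βt (-2) ((θ - θ ^ q) / k2))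
    hk2ne hdq (by simp) (by simp) hθne hβneg hβ0 hβrec (by simp [hβtneg]) (by simp)
    (by simpa using Function.update_neg_two_recursion hk2ne (hθne 1 le_rfl) hβtneg hβt0 hβtrec)
    hβ'nonpos hβ'rec hC0 hCneg fun m hm => by
      simpa only [show B0 = tCoeff0 θ k1 k2 from hB0, show B1 = tCoeff1 k1 k2 from hB1,
        show B2 = tCoeff2 k2 from hB2, tCoeff0_map (· ^ q ^ m.toNat) (hpow _),
        tCoeff1_map (· ^ q ^ (m - 1).toNat) (hpow _), tCoeff2_map (· ^ q ^ (m - 2).toNat) (hpow _),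
        hk2fix] using hCrec m hm
  intro m hm
  rw [hCE, hLmat, hD', hJ, hL1, hL2, hL1', hL2', hLt0, hLt1, hLt2,
    mul_mul_eq_closedForm _ _ _ _ _ _ _ _ _ _ _ h2 hk2ne]
  simp only [logCoeff, Function.update_of_ne (show m - 1 ≠ -2 by omega),
    Function.update_of_ne (show m - 2 ≠ -2 by omega)]

/-- **Coefficients of the logarithm of the symmetric square of a rank-2 Drinfeld module.**
Let `K = 𝔽_q(θ)`, `φ_t = θ + κ₁τ + κ₂τ²` with `κ₁ ∈ 𝔽_q[θ]`, `κ₂ ∈ 𝔽_q^×`, `p` odd.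
With `(β_m)`, `(β̃_m)`, `(β′_m)` the recursively defined logarithm-type coefficients and
`𝐋_m` the explicit `4 × 4` matrix built from them, if `(C_m)` is the sequence of
coefficient matrices of `Log_{Sym²φ}` (i.e. `C_0 = I`, `C_m = 0` for `m < 0` and the
coefficients satisfy the logarithm recursion against `(Sym²φ)_t = B₀ + B₁τ + B₂τ²`),
then `C_m = D′ · 𝐋_m · J` for all `m ≥ 1`. -/
theorem logCoeff_symSquare_eq
    (p : ℕ) [Fact p.Prime] (hp : p ≠ 2)
    (Fq : Type) [Field Fq] [Fintype Fq] [CharP Fq p]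
    (q : ℕ) (hq : q = Fintype.card Fq)
    (κ₁ : Polynomial Fq) (κ₂ : Fqˣ)
    (θ k1 k2 : RatFunc Fq)
    (hθ : θ = RatFunc.X)
    (hk1 : k1 = algebraMap (Polynomial Fq) (RatFunc Fq) κ₁)
    (hk2 : k2 = algebraMap (Polynomial Fq) (RatFunc Fq) (Polynomial.C (κ₂ : Fq)))
    -- the logarithm coefficients β_m of φ
    (β : ℤ → RatFunc Fq)
    (hβneg : ∀ m : ℤ, m < 0 → β m = 0)
    (hβ0 : β 0 = 1)
    (hβrec : ∀ m : ℤ, 1 ≤ m →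
      β m = (k1 ^ q ^ (m - 1).toNat * β (m - 1) + k2 * β (m - 2)) /
        (θ - θ ^ q ^ m.toNat))
    -- the values β̃_m at t = θ of the once-twisted El-Guindy–Papanikolas functions
    (βt : ℤ → RatFunc Fq)
    (hβtneg : ∀ m : ℤ, m < 0 → βt m = 0)
    (hβt0 : βt 0 = 1)
    (hβtrec : ∀ m : ℤ, 1 ≤ m →
      βt m = (k1 ^ q ^ m.toNat * βt (m - 1) + k2 * βt (m - 2)) /
        (θ - θ ^ q ^ (m + 1).toNat))
    -- the values β′_m at t = θ of the t-derivatives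
    (β' : ℤ → RatFunc Fq)
    (hβ'nonpos : ∀ m : ℤ, m ≤ 0 → β' m = 0)
    (hβ'rec : ∀ m : ℤ, 1 ≤ m →
      β' m = (k1 ^ q ^ (m - 1).toNat * β' (m - 1) + k2 * β' (m - 2) - β m) /
        (θ - θ ^ q ^ m.toNat))
    -- the coefficients of the auxiliary logarithm series
    (L1 L2 L1' L2' Lt0 Lt1 Lt2 : ℤ → RatFunc Fq)
    (hL1 : ∀ m : ℤ, L1 m = β m ^ 2)
    (hL2 : ∀ m : ℤ, L2 m = β m * β (m - 1))
    (hL1' : ∀ m : ℤ, L1' m = 2 * β m * β' m)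
    (hL2' : ∀ m : ℤ, L2' m = β' m * β (m - 1) + β m * β' (m - 1))
    (hLt0 : ∀ m : ℤ, Lt0 m = k2 * (β m * βt (m - 2) - β (m - 1) * βt (m - 1)) / (θ - θ ^ q))
    (hLt1 : ∀ m : ℤ, Lt1 m = k2 * (β m * βt (m - 1)) / (θ - θ ^ q))
    (hLt2 : ∀ m : ℤ, Lt2 m = k2 * (β (m - 1) * βt (m - 1)) / (θ - θ ^ q))
    -- the matrix 𝐋_m
    (Lmat : ℤ → Matrix (Fin 4) (Fin 4) (RatFunc Fq))
    (hLmat : ∀ m : ℤ, Lmat m =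
      !![L1 m + (θ - θ ^ q ^ m.toNat) * L1' m, k2 * L2' m,
           k1 ^ q ^ m.toNat * L1' m + k2 * L2' m, k2 * L1' m;
         (θ - θ ^ q ^ m.toNat) * Lt1 m / k2, Lt0 m + Lt2 m,
           k1 ^ q ^ m.toNat * Lt1 m / k2 + Lt2 m, Lt1 m;
         (θ - θ ^ q ^ m.toNat) * Lt1 m / k2, Lt2 m,
           Lt0 m + k1 ^ q ^ m.toNat * Lt1 m / k2 + Lt2 m, Lt1 m;
         (θ - θ ^ q ^ m.toNat) * L1 m / k2, L2 m,
           k1 ^ q ^ m.toNat * L1 m / k2 + L2 m, L1 m])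
    -- the t-action of the symmetric square t-module (Sym²φ)_t = B₀ + B₁τ + B₂τ²
    (B0 B1 B2 : Matrix (Fin 3) (Fin 3) (RatFunc Fq))
    (hB0 : B0 = !![θ, k1, k2; 0, θ, 0; 0, 0, θ])
    (hB1 : B1 = !![0, 0, 0; k1, k2, 0; 0, k1, 0])
    (hB2 : B2 = !![0, 0, 0; 0, 0, 0; k2, 0, 0])
    -- the coefficient matrices of Log_{Sym²φ}
    (C : ℤ → Matrix (Fin 3) (Fin 3) (RatFunc Fq))
    (hC0 : C 0 = 1)
    (hCneg : ∀ m : ℤ, m < 0 → C m = 0)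
    (hCrec : ∀ m : ℤ, 1 ≤ m →
      B0 * C m = C m * B0.map (· ^ q ^ m.toNat)
        + C (m - 1) * B1.map (· ^ q ^ (m - 1).toNat)
        + C (m - 2) * B2.map (· ^ q ^ (m - 2).toNat))
    (D' : Matrix (Fin 3) (Fin 4) (RatFunc Fq))
    (hD' : D' = !![1, 0, 0, 0;
                   0, 1 / 2, 1 / 2, 0;
                   0, -(k1 / (2 * k2)), -(k1 / (2 * k2)), 1])
    (J : Matrix (Fin 4) (Fin 3) (RatFunc Fq))
    (hJ : J = !![1, 0, 0; 0, 1, 0; 0, 1, 0; 0, 0, 1]) :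
    ∀ m : ℤ, 1 ≤ m → C m = D' * Lmat m * J :=
  logCoeff_symSquare_eq_general p hp Fq q hq κ₂ θ k1 k2 hθ hk2 β hβneg hβ0 hβrec βt hβtneg hβt0
    hβtrec β' hβ'nonpos hβ'rec L1 L2 L1' L2' Lt0 Lt1 Lt2 hL1 hL2 hL1' hL2' hLt0 hLt1 hLt2 Lmat hLmat
    B0 B1 B2 hB0 hB1 hB2 C hC0 hCneg hCrec D' hD' J hJ
end

section
/- The logarithm coefficients of the alternating square of φ are given by the L̃_0 series: let c_m ∈ K be defined by c_0 = 1 and c_m = −κ_2·c_{m−1}/(θ − θ^{q^m}) for m ≥ 1 (so c_m = (−κ_2)^m/∏_{i=1}^m(θ − θ^{q^i}) are the coefficients of Log_{Alt²φ}(z) = Σ_m c_m z^{q^m}, where (Alt²φ)_t = θ − κ_2τ is the rank-1 alternating square of φ). Then for every m ≥ 1, c_m = L̃_{0,m} = κ_2(β_m β̃_{m−2} − β_{m−1} β̃_{m−1})/(θ − θ^q). -/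
/-!
Both `β` and `β̃` solve the same second-order recurrence `x ↦ (a x₋₁ + κ₂ x₋₂)/D`, with `β̃`
shifted one step behind `β`. Their Casoratian `β_m β̃_{m-2} - β_{m-1} β̃_{m-1}` therefore
satisfies the first-order recurrence `L_{m+1} = -κ₂ L_m / D_{m+1}`, which is the recurrence
defining `c_m`; the two sides agree at `m = 1`, where the Casoratian is `-1`.
-/

section Casoratian

variable {F : Type*} [Field F]

def casoratian (u v : ℤ → F) (m : ℤ) : F :=
  u m * v (m - 2) - u (m - 1) * v (m - 1)

theorem casoratian_one {u v : ℤ → F} (hu₀ : u 0 = 1) (hv₀ : v 0 = 1) (hv : v (-1) = 0) :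
    casoratian u v 1 = -1 := by
  norm_num [casoratian, hu₀, hv₀, hv]

theorem casoratian_succ {u v : ℤ → F} {a b D : F} (m : ℤ)
    (hu : u (m + 1) = (a * u m + b * u (m - 1)) / D)
    (hv : v m = (a * v (m - 1) + b * v (m - 2)) / D) :
    casoratian u v (m + 1) = -b * casoratian u v m / D := by
  simp only [casoratian, add_sub_cancel_right, show m + 1 - 2 = m - 1 by ring, hu, hv]
  ring

end Casoratian

theorem logCoeff_altSquare_eq_general
    (Fq : Type) [Field Fq]
    (q : ℕ)
    (θ k1 k2 : RatFunc Fq)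
    -- the logarithm coefficients β_m of φ
    (β : ℤ → RatFunc Fq)
    (hβ0 : β 0 = 1)
    (hβrec : ∀ m : ℤ, 1 ≤ m →
      β m = (k1 ^ q ^ (m - 1).toNat * β (m - 1) + k2 * β (m - 2)) /
        (θ - θ ^ q ^ m.toNat))
    -- the values β̃_m at t = θ of the once-twisted El-Guindy–Papanikolas functions
    (βt : ℤ → RatFunc Fq)
    (hβtneg : ∀ m : ℤ, m < 0 → βt m = 0)
    (hβt0 : βt 0 = 1)
    (hβtrec : ∀ m : ℤ, 1 ≤ m →
      βt m = (k1 ^ q ^ m.toNat * βt (m - 1) + k2 * βt (m - 2)) /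
        (θ - θ ^ q ^ (m + 1).toNat))
    -- the logarithm coefficients of the alternating square (Alt²φ)_t = θ - κ₂τ
    (c : ℤ → RatFunc Fq)
    (hc0 : c 0 = 1)
    (hcrec : ∀ m : ℤ, 1 ≤ m →
      c m = -k2 * c (m - 1) / (θ - θ ^ q ^ m.toNat)) :
    ∀ m : ℤ, 1 ≤ m →
      c m = k2 * (β m * βt (m - 2) - β (m - 1) * βt (m - 1)) / (θ - θ ^ q) := by
  suffices h : ∀ m : ℤ, 1 ≤ m → c m = k2 * casoratian β βt m / (θ - θ ^ q) from h
  intro m hm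
  induction m, hm using Int.leInduction with
  | base =>
    rw [hcrec 1 le_rfl, sub_self, hc0,
      casoratian_one hβ0 hβt0 (hβtneg (-1) (by norm_num))]
    simp
  | succ m hm ih =>
    have hβ := hβrec (m + 1) (by omega)
    have hc := hcrec (m + 1) (by omega)
    simp only [add_sub_cancel_right, show m + 1 - 2 = m - 1 by ring] at hβ hc
    rw [hc, ih, casoratian_succ m hβ (hβtrec m hm)]
    ring

/-- **The logarithm coefficients of the alternating square are the `L̃₀` coefficients.**
Let `K = 𝔽_q(θ)`, `φ_t = θ + κ₁τ + κ₂τ²` with `κ₁ ∈ 𝔽_q[θ]`, `κ₂ ∈ 𝔽_q^×`, `p` odd.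
If `(c_m)` are the logarithm coefficients of the rank-1 alternating square
`(Alt²φ)_t = θ - κ₂τ`, i.e. `c_0 = 1` and `c_m = -κ₂ c_{m-1}/(θ - θ^{q^m})` for `m ≥ 1`,
then `c_m = L̃_{0,m} = κ₂ (β_m β̃_{m-2} - β_{m-1} β̃_{m-1})/(θ - θ^q)` for all `m ≥ 1`. -/
theorem logCoeff_altSquare_eq
    (p : ℕ) [Fact p.Prime] (hp : p ≠ 2)
    (Fq : Type) [Field Fq] [Fintype Fq] [CharP Fq p]
    (q : ℕ) (hq : q = Fintype.card Fq)
    (κ₁ : Polynomial Fq) (κ₂ : Fqˣ)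
    (θ k1 k2 : RatFunc Fq)
    (hθ : θ = RatFunc.X)
    (hk1 : k1 = algebraMap (Polynomial Fq) (RatFunc Fq) κ₁)
    (hk2 : k2 = algebraMap (Polynomial Fq) (RatFunc Fq) (Polynomial.C (κ₂ : Fq)))
    -- the logarithm coefficients β_m of φ
    (β : ℤ → RatFunc Fq)
    (hβneg : ∀ m : ℤ, m < 0 → β m = 0)
    (hβ0 : β 0 = 1)
    (hβrec : ∀ m : ℤ, 1 ≤ m →
      β m = (k1 ^ q ^ (m - 1).toNat * β (m - 1) + k2 * β (m - 2)) /
        (θ - θ ^ q ^ m.toNat))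
    -- the values β̃_m at t = θ of the once-twisted El-Guindy–Papanikolas functions
    (βt : ℤ → RatFunc Fq)
    (hβtneg : ∀ m : ℤ, m < 0 → βt m = 0)
    (hβt0 : βt 0 = 1)
    (hβtrec : ∀ m : ℤ, 1 ≤ m →
      βt m = (k1 ^ q ^ m.toNat * βt (m - 1) + k2 * βt (m - 2)) /
        (θ - θ ^ q ^ (m + 1).toNat))
    -- the logarithm coefficients of the alternating square (Alt²φ)_t = θ - κ₂τ
    (c : ℤ → RatFunc Fq)
    (hc0 : c 0 = 1)
    (hcrec : ∀ m : ℤ, 1 ≤ m →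
      c m = -k2 * c (m - 1) / (θ - θ ^ q ^ m.toNat)) :
    ∀ m : ℤ, 1 ≤ m →
      c m = k2 * (β m * βt (m - 2) - β (m - 1) * βt (m - 1)) / (θ - θ ^ q) :=
  logCoeff_altSquare_eq_general Fq q θ k1 k2 β hβ0 hβrec βt hβtneg hβt0 hβtrec c hc0 hcrec
end

section
/- For every m ≥ 1, the product of twisted inverses of the σ-matrix of φ is given by the El-Guindy–Papanikolas coefficients: R_m = Ψ_m Ψ_{m−1} ⋯ Ψ_1 = [[B_m, κ_2 B_{m−1}^{(1)}/(t − θ^q)], [B_{m−1}, κ_2 B_{m−2}^{(1)}/(t − θ^q)]]. -/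
open Matrix

/-- **Products of twisted inverses of the σ-matrix of a rank-2 Drinfeld module.**
Over `K(t)` with `K = 𝔽_q(θ)`, for the rank-2 Drinfeld module `φ_t = θ + κ₁τ + κ₂τ²`
(`κ₁ ∈ 𝔽_q[θ]`, `κ₂ ∈ 𝔽_q^×`), with `σ` the endomorphism of `K(t)` fixing `t` and raising
coefficients to the `q`-th power, `B_m` the El-Guindy–Papanikolas coefficients, and
`Ψ_j = (Φ_φ⁻¹)^{(j)}` the twisted inverses of the σ-matrix, the product
`R_m = Ψ_m ⋯ Ψ_1` equals `[[B_m, κ₂B_{m-1}^{(1)}/(t-θ^q)], [B_{m-1}, κ₂B_{m-2}^{(1)}/(t-θ^q)]]`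
for every `m ≥ 1`. -/
theorem prod_twistedInv_sigmaMatrix
    (p : ℕ) [Fact p.Prime]
    (Fq : Type) [Field Fq] [Fintype Fq] [CharP Fq p]
    (q : ℕ) (hq : q = Fintype.card Fq)
    (κ₁ : Polynomial Fq) (κ₂ : Fqˣ)
    -- the elements t, θ, κ₁, κ₂ of K(t) = (𝔽_q(θ))(t)
    (t θ' k1 k2 : RatFunc (RatFunc Fq))
    (ht : t = RatFunc.X)
    (hθ' : θ' = algebraMap (RatFunc Fq) (RatFunc (RatFunc Fq)) RatFunc.X)
    (hk1 : k1 = algebraMap (RatFunc Fq) (RatFunc (RatFunc Fq))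
      (algebraMap (Polynomial Fq) (RatFunc Fq) κ₁))
    (hk2 : k2 = algebraMap (RatFunc Fq) (RatFunc (RatFunc Fq))
      (algebraMap (Polynomial Fq) (RatFunc Fq) (Polynomial.C (κ₂ : Fq))))
    -- the field endomorphism f ↦ f⁽¹⁾ of K(t), fixing t and raising coefficients to the q
    (σ : RatFunc (RatFunc Fq) →+* RatFunc (RatFunc Fq))
    (hσt : σ RatFunc.X = RatFunc.X)
    (hσc : ∀ x : RatFunc Fq,
      σ (algebraMap (RatFunc Fq) (RatFunc (RatFunc Fq)) x)
        = algebraMap (RatFunc Fq) (RatFunc (RatFunc Fq)) (x ^ q))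
    -- the El-Guindy–Papanikolas coefficients B_m
    (B : ℤ → RatFunc (RatFunc Fq))
    (hBneg : ∀ m : ℤ, m < 0 → B m = 0)
    (hB0 : B 0 = 1)
    (hBrec : ∀ m : ℤ, 1 ≤ m →
      B m = (k1 ^ q ^ (m - 1).toNat * B (m - 1) + k2 * B (m - 2)) /
        (t - θ' ^ q ^ m.toNat))
    -- the twisted inverses Ψ_j = (Φ_φ⁻¹)⁽ʲ⁾ of the matrix representing σ
    (Ψ : ℤ → Matrix (Fin 2) (Fin 2) (RatFunc (RatFunc Fq)))
    (hΨ : ∀ j : ℤ, 1 ≤ j →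
      Ψ j = !![k1 ^ q ^ (j - 1).toNat / (t - θ' ^ q ^ j.toNat),
               k2 / (t - θ' ^ q ^ j.toNat);
               1, 0])
    -- the products R_m = Ψ_m Ψ_{m-1} ⋯ Ψ_1
    (R : ℤ → Matrix (Fin 2) (Fin 2) (RatFunc (RatFunc Fq)))
    (hR1 : R 1 = Ψ 1)
    (hRrec : ∀ m : ℤ, 1 ≤ m → R (m + 1) = Ψ (m + 1) * R m) :
    ∀ m : ℤ, 1 ≤ m →
      R m = !![B m, k2 * σ (B (m - 1)) / (t - θ' ^ q);
               B (m - 1), k2 * σ (B (m - 2)) / (t - θ' ^ q)] := by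
  -- basic facts about σ
  have hσθ : σ θ' = θ' ^ q := by
    rw [hθ', hσc, map_pow]
  have hσt' : σ t = t := by rw [ht, hσt]
  have hσk1 : σ k1 = k1 ^ q := by
    rw [hk1, hσc, map_pow]
  have hσk2 : σ k2 = k2 := by
    have hκ : (κ₂ : Fq) ^ q = (κ₂ : Fq) := by
      rw [hq]; exact FiniteField.pow_card _
    rw [hk2, hσc, ← map_pow, ← Polynomial.C_pow, hκ]
  -- σ applied to the recursion for B
  have hσB : ∀ m : ℤ, 1 ≤ m →
      σ (B m) = (k1 ^ q ^ m.toNat * σ (B (m - 1)) + k2 * σ (B (m - 2))) /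
        (t - θ' ^ q ^ (m + 1).toNat) := by
    intro m hm
    have h1 : (m - 1).toNat + 1 = m.toNat := by omega
    have h2 : m.toNat + 1 = (m + 1).toNat := by omega
    rw [hBrec m hm, map_div₀, map_add, _root_.map_mul, _root_.map_mul, map_sub,
      map_pow, map_pow, hσk1, hσk2, hσθ, hσt']
    rw [← pow_mul, ← pow_mul, ← pow_succ', h1, ← pow_succ', h2]
  -- base case
  have hbase : R 1 = !![B 1, k2 * σ (B ((1:ℤ) - 1)) / (t - θ' ^ q);
      B ((1:ℤ) - 1), k2 * σ (B ((1:ℤ) - 2)) / (t - θ' ^ q)] := by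
    have hb1 : B 1 = k1 ^ q ^ (0 : ℕ) / (t - θ' ^ q ^ (1 : ℕ)) := by
      rw [hBrec 1 le_rfl]
      norm_num [hB0, hBneg (-1) (by norm_num)]
    rw [hR1, hΨ 1 le_rfl]
    have e11 : k1 ^ q ^ ((1:ℤ) - 1).toNat / (t - θ' ^ q ^ (1:ℤ).toNat)
        = B (1 : ℤ) := by
      rw [hb1]; norm_num
    have e12 : k2 / (t - θ' ^ q ^ (1:ℤ).toNat)
        = k2 * σ (B ((1:ℤ) - 1)) / (t - θ' ^ q) := by
      norm_num [hB0, _root_.map_one]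
    have e21 : (1 : RatFunc (RatFunc Fq)) = B ((1:ℤ) - 1) := by norm_num [hB0]
    have e22 : (0 : RatFunc (RatFunc Fq))
        = k2 * σ (B ((1:ℤ) - 2)) / (t - θ' ^ q) := by
      norm_num [hBneg (-1) (by norm_num), _root_.map_zero]
    rw [e11, e12, e21, e22]
  -- inductive step
  have hstep : ∀ m : ℤ, 1 ≤ m →
      R m = !![B m, k2 * σ (B (m - 1)) / (t - θ' ^ q);
               B (m - 1), k2 * σ (B (m - 2)) / (t - θ' ^ q)] →
      R (m + 1) = !![B (m + 1), k2 * σ (B (m + 1 - 1)) / (t - θ' ^ q);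
               B (m + 1 - 1), k2 * σ (B (m + 1 - 2)) / (t - θ' ^ q)] := by
    intro m hm ih
    rw [hRrec m hm, hΨ (m + 1) (by omega), ih, Matrix.mul_fin_two]
    have em : (m + 1 - 1 : ℤ) = m := by ring
    have em' : (m + 1 - 2 : ℤ) = m - 1 := by ring
    have e11 : k1 ^ q ^ (m + 1 - 1).toNat / (t - θ' ^ q ^ (m + 1).toNat) * B m +
        k2 / (t - θ' ^ q ^ (m + 1).toNat) * B (m - 1) = B (m + 1) := by
      rw [hBrec (m + 1) (by omega), em, em']
      simp only [div_eq_mul_inv]; ring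
    have e12 : k1 ^ q ^ (m + 1 - 1).toNat / (t - θ' ^ q ^ (m + 1).toNat) *
          (k2 * σ (B (m - 1)) / (t - θ' ^ q)) +
        k2 / (t - θ' ^ q ^ (m + 1).toNat) * (k2 * σ (B (m - 2)) / (t - θ' ^ q)) =
        k2 * σ (B (m + 1 - 1)) / (t - θ' ^ q) := by
      rw [em, hσB m hm]
      simp only [div_eq_mul_inv]; ring
    have e21 : (1 : RatFunc (RatFunc Fq)) * B m + 0 * B (m - 1) = B (m + 1 - 1) := by
      rw [em]; ring
    have e22 : (1 : RatFunc (RatFunc Fq)) * (k2 * σ (B (m - 1)) / (t - θ' ^ q)) +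
        0 * (k2 * σ (B (m - 2)) / (t - θ' ^ q)) =
        k2 * σ (B (m + 1 - 2)) / (t - θ' ^ q) := by
      rw [em']; ring
    rw [e11, e12, e21, e22]
  -- induction
  intro m hm
  obtain ⟨n, rfl⟩ : ∃ n : ℕ, m = 1 + n := ⟨(m - 1).toNat, by omega⟩
  clear hm
  induction n with
  | zero => simpa using hbase
  | succ n ih =>
      have hc : ((1 : ℤ) + (n + 1 : ℕ)) = (1 + (n : ℤ)) + 1 := by push_cast; ring
      rw [hc]
      exact hstep (1 + (n : ℤ)) (by omega) ih
end

section
/- The symmetrized basis gives a free basis of the symmetric square of the t-motive of φ: let Sym²M ⊆ M ⊗_{F[t]} M be the F[t]-submodule spanned by all elements a⊗b + b⊗a with a, b ∈ M. Then the family of vectors τ^k(ξ_i), for k ∈ ℕ and 0 ≤ i ≤ r, where ξ_0 = m_0⊗m_0 and ξ_i = (1/2)(m_0⊗m_i + m_i⊗m_0) for 1 ≤ i ≤ r, is F-linearly independent and its F-span equals Sym²M; equivalently, the set {1⊗1, (1/2)(1⊗τ^i + τ^i⊗1) : 1 ≤ i ≤ r} is a free basis of Sym²(M_φ) as a module over the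 twisted polynomial ring F[τ]. -/
open TensorProduct

open Polynomial

namespace SymSqAux

structure Setup (F : Type) [Field F] (r : ℕ) where
  hr : 1 ≤ r
  h2 : (2 : F) ≠ 0
  θ : F
  κ : Fin r → F
  hκ : κ ⟨r - 1, by omega⟩ ≠ 0
  φq : F →+* F
  τ : (Fin r → Polynomial F) → (Fin r → Polynomial F)
  hadd : ∀ x y, τ (x + y) = τ x + τ y
  hsemi : ∀ (f : Polynomial F) (v : Fin r → Polynomial F),
      τ (f • v) = (f.map φq) • τ v
  hstep : ∀ i : Fin r, ∀ h : (i : ℕ) + 1 < r,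
      τ (Pi.single i (1 : Polynomial F)) = Pi.single (⟨(i : ℕ) + 1, h⟩ : Fin r) 1
  hlast : τ (Pi.single (⟨r - 1, by omega⟩ : Fin r) (1 : Polynomial F)) =
      (κ ⟨r - 1, by omega⟩)⁻¹ •
        ((Polynomial.X - Polynomial.C θ) •
            (Pi.single (⟨0, by omega⟩ : Fin r) 1 : Fin r → Polynomial F)
          - ∑ j : Fin (r - 1),
              Polynomial.C (κ ⟨(j : ℕ), by have := j.2; omega⟩) •
                (Pi.single (⟨(j : ℕ) + 1, by have := j.2; omega⟩ : Fin r) 1 :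
                  Fin r → Polynomial F))

variable {F : Type} [Field F] {r : ℕ} (S : Setup F r)

def Setup.z : Fin r := ⟨0, by have := S.hr; omega⟩
def Setup.lst : Fin r := ⟨r - 1, by have := S.hr; omega⟩

noncomputable def Setup.m (a : ℕ) : Fin r → Polynomial F := S.τ^[a] (Pi.single S.z 1)

lemma Setup.tau_sum {ι : Type*} (s : Finset ι) (f : ι → (Fin r → Polynomial F)) :
    S.τ (∑ i ∈ s, f i) = ∑ i ∈ s, S.τ (f i) :=
  map_sum (AddMonoidHom.mk' S.τ S.hadd) f s

lemma pi_decomp (v : Fin r → Polynomial F) :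
    v = ∑ i, (v i) • (Pi.single i (1 : Polynomial F) : Fin r → Polynomial F) := by
  have h : ∀ i : Fin r, (v i) • (Pi.single i (1 : Polynomial F) : Fin r → Polynomial F)
      = Pi.single i (v i) := by
    intro i
    funext j
    simp [Pi.single_apply]
  simp_rw [h]
  exact (Finset.univ_sum_single v).symm

lemma Setup.tau_apply (v : Fin r → Polynomial F) (w : Fin r) :
    (S.τ v) w = ∑ i, ((v i).map S.φq) * ((S.τ (Pi.single i 1)) w) := by
  conv_lhs => rw [show v = ∑ i, (v i) •
    (Pi.single i (1 : Polynomial F) : Fin r → Polynomial F) from pi_decomp v]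
  rw [S.tau_sum, Finset.sum_apply]
  congr 1
  funext i
  rw [S.hsemi]
  simp

lemma Setup.tau_single_z (i : Fin r) (hi : (i : ℕ) + 1 < r) :
    (S.τ (Pi.single i (1 : Polynomial F))) S.z = 0 := by
  rw [S.hstep i hi]
  have h : S.z ≠ (⟨(i : ℕ) + 1, hi⟩ : Fin r) := by
    simp [Setup.z, Fin.ext_iff]
  simp [Pi.single_apply, h]

lemma Setup.tau_single_succ (i : Fin r) (hi : (i : ℕ) + 1 < r) (j : ℕ) (hj : j + 1 < r) :
    (S.τ (Pi.single i (1 : Polynomial F))) ⟨j + 1, hj⟩ =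
      if (i : ℕ) = j then 1 else 0 := by
  rw [S.hstep i hi]
  by_cases h : (i : ℕ) = j
  · simp [Pi.single_apply, Fin.ext_iff, h]
  · rw [if_neg h]
    have h2 : ((⟨j + 1, hj⟩ : Fin r)) ≠ (⟨(i : ℕ) + 1, hi⟩ : Fin r) := by
      simp [Fin.ext_iff]; omega
    simp [Pi.single_apply, h2]

lemma Setup.tau_lst_z :
    (S.τ (Pi.single S.lst (1 : Polynomial F))) S.z =
      C (S.κ S.lst)⁻¹ * (X - C S.θ) := by
  have hl : S.lst = (⟨r - 1, by have := S.hr; omega⟩ : Fin r) := rfl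
  rw [hl, S.hlast]
  simp only [Pi.smul_apply, Pi.sub_apply, Finset.sum_apply]
  have h1 : (Pi.single (⟨0, by have := S.hr; omega⟩ : Fin r) (1 : Polynomial F) :
      Fin r → Polynomial F) S.z = 1 := by
    have h : S.z = (⟨0, by have := S.hr; omega⟩ : Fin r) := rfl
    rw [h]; simp
  have h2 : ∀ j : Fin (r - 1),
      (Pi.single (⟨(j : ℕ) + 1, by have := j.2; omega⟩ : Fin r) (1 : Polynomial F) :
          Fin r → Polynomial F) S.z = 0 := by
    intro j
    have h : S.z ≠ (⟨(j : ℕ) + 1, by have := j.2; omega⟩ : Fin r) := by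
      simp [Setup.z, Fin.ext_iff]
    simp [Pi.single_apply, h]
  rw [h1]
  rw [Finset.sum_congr rfl (fun j _ => by rw [h2 j])]
  simp [smul_eq_C_mul]


lemma Setup.tau_lst_succ (j : ℕ) (hj : j + 1 < r) :
    (S.τ (Pi.single S.lst (1 : Polynomial F))) ⟨j + 1, hj⟩ =
      - C ((S.κ S.lst)⁻¹ * S.κ ⟨j, Nat.lt_of_succ_lt hj⟩) := by
  have hl : S.lst = (⟨r - 1, by have := S.hr; omega⟩ : Fin r) := rfl
  rw [hl, S.hlast]
  simp only [Pi.smul_apply, Pi.sub_apply, Finset.sum_apply]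
  have h1 : (Pi.single (⟨0, by have := S.hr; omega⟩ : Fin r) (1 : Polynomial F) :
      Fin r → Polynomial F) ⟨j + 1, hj⟩ = 0 := by
    have h : (⟨j + 1, hj⟩ : Fin r) ≠ (⟨0, by have := S.hr; omega⟩ : Fin r) := by
      simp [Fin.ext_iff]
    simp [Pi.single_apply, h]
  rw [h1]
  have hjr : j < r - 1 := by omega
  have h2 : ∑ x : Fin (r - 1), C (S.κ ⟨(x : ℕ), by have := x.2; omega⟩) •
      ((Pi.single (⟨(x : ℕ) + 1, by have := x.2; omega⟩ : Fin r) (1 : Polynomial F) :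
        Fin r → Polynomial F) ⟨j + 1, hj⟩) = C (S.κ ⟨j, Nat.lt_of_succ_lt hj⟩) := by
    rw [Finset.sum_eq_single_of_mem (⟨j, hjr⟩ : Fin (r - 1)) (Finset.mem_univ _)]
    · have h : (⟨j + 1, hj⟩ : Fin r) = (⟨j + 1, by omega⟩ : Fin r) := rfl
      simp [Pi.single_apply]
    · intro b _ hb
      have h : (⟨j + 1, hj⟩ : Fin r) ≠ (⟨(b : ℕ) + 1, by have := b.2; omega⟩ : Fin r) := by
        simp only [ne_eq, Fin.ext_iff]
        have : (b : ℕ) ≠ j := fun he => hb (Fin.ext he)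
        simp; omega
      simp [Pi.single_apply, h]
  rw [h2]
  simp [smul_eq_C_mul, mul_comm]

lemma Setup.coord_z (v : Fin r → Polynomial F) :
    (S.τ v) S.z = C (S.κ S.lst)⁻¹ * (X - C S.θ) * ((v S.lst).map S.φq) := by
  rw [S.tau_apply]
  rw [Finset.sum_eq_single_of_mem S.lst (Finset.mem_univ _)]
  · rw [S.tau_lst_z]; ring
  · intro i _ hi
    have hi' : (i : ℕ) + 1 < r := by
      have h1 : (i : ℕ) < r := i.2
      have h2 : (i : ℕ) ≠ r - 1 := fun he => hi (Fin.ext (by simp [Setup.lst, he]))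
      omega
    rw [S.tau_single_z i hi', mul_zero]

lemma Setup.coord_succ (v : Fin r → Polynomial F) (j : ℕ) (hj : j + 1 < r) :
    (S.τ v) ⟨j + 1, hj⟩ = ((v ⟨j, Nat.lt_of_succ_lt hj⟩).map S.φq)
      - C ((S.κ S.lst)⁻¹ * S.κ ⟨j, Nat.lt_of_succ_lt hj⟩) * ((v S.lst).map S.φq) := by
  rw [S.tau_apply]
  have hne : (⟨j, Nat.lt_of_succ_lt hj⟩ : Fin r) ≠ S.lst := by
    simp [Setup.lst, Fin.ext_iff]; omega
  rw [← Finset.sum_erase_add _ _ (Finset.mem_univ S.lst)]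
  rw [Finset.sum_eq_single_of_mem (⟨j, Nat.lt_of_succ_lt hj⟩ : Fin r)
      (Finset.mem_erase.mpr ⟨hne, Finset.mem_univ _⟩)]
  · rw [S.tau_lst_succ j hj]
    have hjj : ((⟨j, Nat.lt_of_succ_lt hj⟩ : Fin r) : ℕ) = j := rfl
    rw [S.tau_single_succ _ (by simp [hjj]; omega) j hj]
    simp [hjj]
    ring
  · intro b hb hbne
    have hblst : b ≠ S.lst := (Finset.mem_erase.mp hb).1
    have hb' : (b : ℕ) + 1 < r := by
      have h1 : (b : ℕ) < r := b.2
      have h2 : (b : ℕ) ≠ r - 1 := fun he => hblst (Fin.ext (by simp [Setup.lst, he]))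
      omega
    rw [S.tau_single_succ b hb' j hj]
    have : (b : ℕ) ≠ j := fun he => hbne (Fin.ext he)
    simp [this]


lemma Setup.coeff_z_succ (v : Fin r → Polynomial F) (n : ℕ) :
    ((S.τ v) S.z).coeff (n + 1) =
      (S.κ S.lst)⁻¹ * (S.φq ((v S.lst).coeff n) - S.θ * S.φq ((v S.lst).coeff (n + 1))) := by
  rw [S.coord_z]
  rw [show C (S.κ S.lst)⁻¹ * (X - C S.θ) * Polynomial.map S.φq (v S.lst)
      = C (S.κ S.lst)⁻¹ * (X * Polynomial.map S.φq (v S.lst)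
        - C S.θ * Polynomial.map S.φq (v S.lst)) from by ring]
  simp [coeff_C_mul, coeff_sub, coeff_X_mul, coeff_map, mul_sub]

lemma Setup.coeff_z_zero (v : Fin r → Polynomial F) :
    ((S.τ v) S.z).coeff 0 = (S.κ S.lst)⁻¹ * (0 - S.θ * S.φq ((v S.lst).coeff 0)) := by
  rw [S.coord_z]
  rw [show C (S.κ S.lst)⁻¹ * (X - C S.θ) * Polynomial.map S.φq (v S.lst)
      = C (S.κ S.lst)⁻¹ * (X * Polynomial.map S.φq (v S.lst)
        - C S.θ * Polynomial.map S.φq (v S.lst)) from by ring]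
  simp [coeff_C_mul, coeff_sub, Polynomial.mul_coeff_zero, coeff_map, mul_sub]

lemma Setup.coeff_succ (v : Fin r → Polynomial F) (j : ℕ) (hj : j + 1 < r) (n : ℕ) :
    ((S.τ v) ⟨j + 1, hj⟩).coeff n =
      S.φq ((v ⟨j, Nat.lt_of_succ_lt hj⟩).coeff n)
        - (S.κ S.lst)⁻¹ * S.κ ⟨j, Nat.lt_of_succ_lt hj⟩ * S.φq ((v S.lst).coeff n) := by
  rw [S.coord_succ v j hj]
  simp only [coeff_sub, coeff_C_mul, coeff_map]

lemma Setup.m_succ (a : ℕ) : S.m (a + 1) = S.τ (S.m a) := by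
  simp [Setup.m, Function.iterate_succ_apply']

lemma Setup.lst_coe : ((S.lst : Fin r) : ℕ) = r - 1 := rfl

/-- A1 : coefficients above the weight vanish. -/
lemma Setup.coeff_hi : ∀ (a n : ℕ) (i : Fin r), a < n * r + (i : ℕ) →
    ((S.m a) i).coeff n = 0 := by
  intro a
  induction a with
  | zero =>
    intro n i h
    have hm : S.m 0 = Pi.single S.z (1 : Polynomial F) := rfl
    rw [hm]
    by_cases hi : i = S.z
    · have hiz : (i : ℕ) = 0 := by rw [hi]; rfl
      rw [hi]
      match n, (by omega : n * r > 0) with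
      | n + 1, _ =>
        simp [Pi.single_apply, Polynomial.coeff_one]
      | 0, hh => simp at hh
    · simp [Pi.single_apply, hi]
  | succ a ih =>
    intro n i h
    rw [S.m_succ]
    have el : ((S.lst : Fin r) : ℕ) = r - 1 := rfl
    have hr1 : 1 ≤ r := S.hr
    rcases i with ⟨iv, hiv⟩
    match iv, hiv, h with
    | 0, hiv, h =>
      have hco : ((⟨0, hiv⟩ : Fin r) : ℕ) = 0 := rfl
      have h' : a + 1 < n * r := by omega
      match n, h' with
      | 0, h' => omega
      | n + 1, h' =>
        rw [show (⟨0, hiv⟩ : Fin r) = S.z from rfl]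
        rw [S.coeff_z_succ]
        have hm1 : (n + 1) * r = n * r + r := by ring
        have e1 : ((S.m a) S.lst).coeff n = 0 := by apply ih; omega
        have e2 : ((S.m a) S.lst).coeff (n + 1) = 0 := by apply ih; omega
        rw [e1, e2]
        simp
    | j + 1, hiv, h =>
      have hco : ((⟨j + 1, hiv⟩ : Fin r) : ℕ) = j + 1 := rfl
      rw [S.coeff_succ _ j hiv n]
      have ej : ((⟨j, Nat.lt_of_succ_lt hiv⟩ : Fin r) : ℕ) = j := rfl
      have e1 : ((S.m a) ⟨j, Nat.lt_of_succ_lt hiv⟩).coeff n = 0 := by apply ih; omega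
      have e2 : ((S.m a) S.lst).coeff n = 0 := by apply ih; omega
      rw [e1, e2]
      simp


include S in
lemma Setup.rpos : 0 < r := S.hr

lemma Setup.hκl : S.κ S.lst ≠ 0 := S.hκ

/-- A2 : the leading coefficient is nonzero. -/
lemma Setup.lead_ne : ∀ a : ℕ,
    ((S.m a) ⟨a % r, Nat.mod_lt a S.rpos⟩).coeff (a / r) ≠ 0 := by
  intro a
  induction a with
  | zero =>
    have hz : (⟨0 % r, Nat.mod_lt 0 S.rpos⟩ : Fin r) = S.z := by
      apply Fin.ext; simp [Setup.z]
    rw [hz]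
    have hm : S.m 0 = Pi.single S.z (1 : Polynomial F) := rfl
    rw [hm]
    simp [Nat.zero_div]
  | succ a ih =>
    have hrpos : 0 < r := S.rpos
    have hφinj : Function.Injective S.φq := S.φq.injective
    by_cases h0 : (a + 1) % r = 0
    · -- a + 1 is a multiple of r
      have hdm := Nat.div_add_mod (a + 1) r
      set k := (a + 1) / r with hk
      rw [h0] at hdm
      -- hdm : r * k + 0 = a + 1
      match k, hdm with
      | 0, hdm => omega
      | k' + 1, hdm =>
        have hmul : r * (k' + 1) = r * k' + r := by ring
        have ha : a = r * k' + (r - 1) := by omega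
        have amod : a % r = r - 1 := by
          rw [ha, Nat.mul_add_mod, Nat.mod_eq_of_lt (by omega)]
        have adiv : a / r = k' := by
          rw [ha, Nat.mul_add_div hrpos, Nat.div_eq_of_lt (by omega), Nat.add_zero]
        have hidx : (⟨(a + 1) % r, Nat.mod_lt (a + 1) S.rpos⟩ : Fin r) = S.z := by
          apply Fin.ext; simp [Setup.z, h0]
        rw [hidx, S.m_succ, S.coeff_z_succ]
        have e2 : ((S.m a) S.lst).coeff (k' + 1) = 0 := by
          apply S.coeff_hi
          rw [S.lst_coe]
          have : (k' + 1) * r = r * k' + r := by ring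
          omega
        have e1 : ((S.m a) S.lst).coeff k' ≠ 0 := by
          have hlst : S.lst = (⟨a % r, Nat.mod_lt a S.rpos⟩ : Fin r) :=
            Fin.ext amod.symm
          rw [hlst, ← adiv]
          exact ih
        rw [e2]
        simp only [map_zero, mul_zero, sub_zero]
        exact mul_ne_zero (inv_ne_zero S.hκl) ((map_ne_zero_iff S.φq hφinj).mpr e1)
    · -- (a+1) % r = j + 1
      obtain ⟨j, hj⟩ : ∃ j, (a + 1) % r = j + 1 := ⟨(a + 1) % r - 1, by omega⟩
      have hjr : j + 1 < r := by
        have := Nat.mod_lt (a + 1) hrpos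
        omega
      have hdm := Nat.div_add_mod (a + 1) r
      set k := (a + 1) / r with hk
      rw [hj] at hdm
      -- hdm : r * k + (j + 1) = a + 1
      have ha : a = r * k + j := by omega
      have amod : a % r = j := by
        rw [ha, Nat.mul_add_mod, Nat.mod_eq_of_lt (by omega)]
      have adiv : a / r = k := by
        rw [ha, Nat.mul_add_div hrpos, Nat.div_eq_of_lt (by omega), Nat.add_zero]
      have hidx : (⟨(a + 1) % r, Nat.mod_lt (a + 1) S.rpos⟩ : Fin r)
          = (⟨j + 1, hjr⟩ : Fin r) := by
        apply Fin.ext; simp [hj]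
      rw [hidx, S.m_succ, S.coeff_succ _ j hjr]
      have e2 : ((S.m a) S.lst).coeff k = 0 := by
        apply S.coeff_hi
        rw [S.lst_coe]
        have : k * r = r * k := by ring
        omega
      have e1 : ((S.m a) ⟨j, Nat.lt_of_succ_lt hjr⟩).coeff k ≠ 0 := by
        have hlst : (⟨j, Nat.lt_of_succ_lt hjr⟩ : Fin r)
            = (⟨a % r, Nat.mod_lt a S.rpos⟩ : Fin r) := Fin.ext amod.symm
        rw [hlst, ← adiv]
        exact ih
      rw [e2]
      simp only [map_zero, mul_zero, sub_zero]
      exact (map_ne_zero_iff S.φq hφinj).mpr e1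


/-! ### Tensor level -/

abbrev MM (F : Type) [Field F] (r : ℕ) :=
  (Fin r → Polynomial F) ⊗[Polynomial F] (Fin r → Polynomial F)

noncomputable def coordB (i j : Fin r) :
    (Fin r → Polynomial F) →ₗ[Polynomial F]
      (Fin r → Polynomial F) →ₗ[Polynomial F] Polynomial F :=
  LinearMap.mk₂ (Polynomial F) (fun x y => x i * y j)
    (fun x x' y => by simp [add_mul])
    (fun c x y => by simp [smul_eq_mul]; ring)
    (fun x y y' => by simp [mul_add])
    (fun c x y => by simp [smul_eq_mul]; ring)

noncomputable def coordT (i j : Fin r) : MM F r →ₗ[Polynomial F] Polynomial F :=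
  TensorProduct.lift (coordB i j)

lemma coordT_tmul (i j : Fin r) (x y : Fin r → Polynomial F) :
    coordT i j (x ⊗ₜ[Polynomial F] y) = x i * y j := rfl

noncomputable def Dc (n : ℕ) (i j : Fin r) : MM F r →ₗ[F] F :=
  (Polynomial.lcoeff F n).comp ((coordT i j).restrictScalars F)

lemma Dc_apply (n : ℕ) (i j : Fin r) (x : MM F r) :
    Dc n i j x = (coordT i j x).coeff n := rfl

lemma Dc_tmul (n : ℕ) (i j : Fin r) (x y : Fin r → Polynomial F) :
    Dc n i j (x ⊗ₜ[Polynomial F] y) = (x i * y j).coeff n := rfl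

/-- the symmetrized products -/
noncomputable def Setup.sym (a b : ℕ) : MM F r :=
  (2 : F)⁻¹ • (S.m a ⊗ₜ[Polynomial F] S.m b + S.m b ⊗ₜ[Polynomial F] S.m a)

/-- symmetric monomials -/
noncomputable def nu (n : ℕ) (i j : Fin r) : MM F r :=
  (X ^ n : Polynomial F) •
    ((Pi.single i 1 : Fin r → Polynomial F) ⊗ₜ[Polynomial F]
        (Pi.single j 1 : Fin r → Polynomial F)
      + (Pi.single j 1 : Fin r → Polynomial F) ⊗ₜ[Polynomial F]
        (Pi.single i 1 : Fin r → Polynomial F))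

/-- plain monomials -/
noncomputable def nuO (n : ℕ) (i j : Fin r) : MM F r :=
  (X ^ n : Polynomial F) •
    ((Pi.single i 1 : Fin r → Polynomial F) ⊗ₜ[Polynomial F]
        (Pi.single j 1 : Fin r → Polynomial F))

lemma nu_eq (n : ℕ) (i j : Fin r) :
    (nu n i j : MM F r) = nuO n i j + nuO n j i := by
  simp [nu, nuO, smul_add]

lemma nu_symm (n : ℕ) (i j : Fin r) : (nu n i j : MM F r) = nu n j i := by
  simp [nu, add_comm]

lemma Dc_nuO (n n' : ℕ) (i j i' j' : Fin r) :
    Dc n i j (nuO n' i' j' : MM F r) =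
      (if n = n' then 1 else 0) * (if i = i' then 1 else 0) * (if j = j' then 1 else 0) := by
  rw [Dc_apply, nuO, map_smul]
  rw [coordT_tmul]
  simp only [smul_eq_mul, Pi.single_apply]
  by_cases h1 : i = i' <;> by_cases h2 : j = j' <;>
    simp [h1, h2, coeff_X_pow]

lemma Dc_nu (n n' : ℕ) (i j i' j' : Fin r) :
    Dc n i j (nu n' i' j' : MM F r) =
      (if n = n' then 1 else 0) *
        ((if i = i' then 1 else 0) * (if j = j' then 1 else 0)
          + (if i = j' then 1 else 0) * (if j = i' then 1 else 0)) := by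
  rw [nu_eq, map_add, Dc_nuO, Dc_nuO]
  ring

/-- C1: vanishing of coefficients above total weight. -/
lemma Setup.Dc_m_hi (a b n : ℕ) (i j : Fin r)
    (h : a + b < n * r + (i : ℕ) + (j : ℕ)) :
    Dc n i j (S.m a ⊗ₜ[Polynomial F] S.m b) = 0 := by
  rw [Dc_tmul, coeff_mul]
  apply Finset.sum_eq_zero
  rintro ⟨u, v⟩ huv
  have huvn : u + v = n := Finset.HasAntidiagonal.mem_antidiagonal.mp huv
  by_cases hu : a < u * r + (i : ℕ)
  · rw [show ((u,v).1 : ℕ) = u from rfl, S.coeff_hi a u i hu, zero_mul]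
  · have hv : b < v * r + (j : ℕ) := by
      push_neg at hu
      have : n * r = u * r + v * r := by rw [← huvn]; ring
      omega
    rw [show ((u,v).2 : ℕ) = v from rfl, S.coeff_hi b v j hv, mul_zero]

lemma mod_div_eq {u i : ℕ} (hrpos : 0 < r) (hir : i < r) :
    (u * r + i) % r = i ∧ (u * r + i) / r = u := by
  constructor
  · rw [Nat.mul_comm, Nat.mul_add_mod, Nat.mod_eq_of_lt hir]
  · rw [Nat.mul_comm, Nat.mul_add_div hrpos, Nat.div_eq_of_lt hir, Nat.add_zero]

/-- C2: at exact weight, nonvanishing pins down the indices. -/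
lemma Setup.Dc_m_diag (a b n : ℕ) (i j : Fin r)
    (h : a + b = n * r + (i : ℕ) + (j : ℕ))
    (hD : Dc n i j (S.m a ⊗ₜ[Polynomial F] S.m b) ≠ 0) :
    (i : ℕ) = a % r ∧ (j : ℕ) = b % r ∧ n = a / r + b / r := by
  rw [Dc_tmul, coeff_mul] at hD
  obtain ⟨⟨u, v⟩, huv, hne⟩ := Finset.exists_ne_zero_of_sum_ne_zero hD
  have huvn : u + v = n := Finset.HasAntidiagonal.mem_antidiagonal.mp huv
  have hu : ¬ (a < u * r + (i : ℕ)) := fun hc => hne (by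
    rw [show ((u,v).1 : ℕ) = u from rfl, S.coeff_hi a u i hc, zero_mul])
  have hv : ¬ (b < v * r + (j : ℕ)) := fun hc => hne (by
    rw [show ((u,v).2 : ℕ) = v from rfl, S.coeff_hi b v j hc, mul_zero])
  push_neg at hu hv
  have hnr : n * r = u * r + v * r := by rw [← huvn]; ring
  have hua : u * r + (i : ℕ) = a := by omega
  have hvb : v * r + (j : ℕ) = b := by omega
  obtain ⟨ha1, ha2⟩ := mod_div_eq (u := u) (i := (i : ℕ)) S.rpos i.2
  obtain ⟨hb1, hb2⟩ := mod_div_eq (u := v) (i := (j : ℕ)) S.rpos j.2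
  rw [hua] at ha1 ha2
  rw [hvb] at hb1 hb2
  exact ⟨ha1.symm, hb1.symm, by omega⟩

lemma lt_weight {x w r : ℕ} (hrpos : 0 < r) (h : x / r < w) : x < w * r + x % r := by
  have h1 : r * (x / r + 1) ≤ r * w := Nat.mul_le_mul_left r h
  have h2 : r * (x / r + 1) = r * (x / r) + r := by ring
  have h3 := Nat.div_add_mod x r
  have h4 : x % r < r := Nat.mod_lt x hrpos
  have h5 : r * w = w * r := Nat.mul_comm r w
  omega

noncomputable def Setup.L (a : ℕ) : F :=
  ((S.m a) ⟨a % r, Nat.mod_lt a S.rpos⟩).coeff (a / r)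

lemma Setup.L_ne (a : ℕ) : S.L a ≠ 0 := S.lead_ne a

/-- C3: the leading coefficient of a pure tensor. -/
lemma Setup.Dc_m_lead (a b : ℕ) :
    Dc (a / r + b / r) (⟨a % r, Nat.mod_lt a S.rpos⟩ : Fin r)
        (⟨b % r, Nat.mod_lt b S.rpos⟩ : Fin r)
        (S.m a ⊗ₜ[Polynomial F] S.m b) = S.L a * S.L b := by
  rw [Dc_tmul, coeff_mul, Finset.sum_eq_single_of_mem (a / r, b / r)
      (Finset.HasAntidiagonal.mem_antidiagonal.mpr rfl)]
  · rfl
  · rintro ⟨u, v⟩ huv hne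
    have huvn : u + v = a / r + b / r := Finset.HasAntidiagonal.mem_antidiagonal.mp huv
    rcases Nat.lt_or_ge u (a / r) with hu | hu
    · have hv : b / r < v := by omega
      rw [show ((u,v).2 : ℕ) = v from rfl,
        S.coeff_hi b v (⟨b % r, Nat.mod_lt b S.rpos⟩ : Fin r) (lt_weight S.rpos hv), mul_zero]
    · have hustrict : a / r < u := by
        rcases Nat.eq_or_lt_of_le hu with h1 | h2
        · exfalso
          exact hne (Prod.ext h1.symm (by omega))
        · exact h2
      rw [show ((u,v).1 : ℕ) = u from rfl,
        S.coeff_hi a u (⟨a % r, Nat.mod_lt a S.rpos⟩ : Fin r) (lt_weight S.rpos hustrict), zero_mul]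

lemma Setup.Dc_sym (n : ℕ) (i j : Fin r) (a b : ℕ) :
    Dc n i j (S.sym a b) = (2 : F)⁻¹ *
      (((S.m a) i * (S.m b) j).coeff n + ((S.m b) i * (S.m a) j).coeff n) := by
  rw [Setup.sym, map_smul, map_add, Dc_tmul, Dc_tmul]
  simp [smul_eq_mul]

lemma Setup.Dc_sym_symm (n : ℕ) (i j : Fin r) (a b : ℕ) :
    Dc n i j (S.sym a b) = Dc n j i (S.sym a b) := by
  rw [S.Dc_sym, S.Dc_sym, mul_comm ((S.m a) i) ((S.m b) j),
    mul_comm ((S.m b) i) ((S.m a) j), add_comm]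

/-- S1 -/
lemma Setup.Dc_sym_hi (a b n : ℕ) (i j : Fin r)
    (h : a + b < n * r + (i : ℕ) + (j : ℕ)) :
    Dc n i j (S.sym a b) = 0 := by
  rw [Setup.sym, map_smul, map_add]
  rw [S.Dc_m_hi a b n i j h, S.Dc_m_hi b a n i j (by omega)]
  simp

/-- S2 -/
lemma Setup.Dc_sym_diag (a b n : ℕ) (i j : Fin r)
    (h : a + b = n * r + (i : ℕ) + (j : ℕ))
    (hD : Dc n i j (S.sym a b) ≠ 0) :
    (((i : ℕ) = a % r ∧ (j : ℕ) = b % r) ∨ ((i : ℕ) = b % r ∧ (j : ℕ) = a % r))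
      ∧ n = a / r + b / r := by
  rw [Setup.sym, map_smul, map_add] at hD
  have hor : Dc n i j (S.m a ⊗ₜ[Polynomial F] S.m b) ≠ 0
      ∨ Dc n i j (S.m b ⊗ₜ[Polynomial F] S.m a) ≠ 0 := by
    by_contra hc
    push_neg at hc
    rw [hc.1, hc.2] at hD
    simp at hD
  rcases hor with h1 | h2
  · obtain ⟨e1, e2, e3⟩ := S.Dc_m_diag a b n i j h h1
    exact ⟨Or.inl ⟨e1, e2⟩, e3⟩
  · obtain ⟨e1, e2, e3⟩ := S.Dc_m_diag b a n i j (by omega) h2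
    exact ⟨Or.inr ⟨e1, e2⟩, by omega⟩

/-- S3: the leading coefficient of `sym` is nonzero. -/
lemma Setup.Dc_sym_lead (a b : ℕ) :
    Dc (a / r + b / r) (⟨a % r, Nat.mod_lt a S.rpos⟩ : Fin r)
        (⟨b % r, Nat.mod_lt b S.rpos⟩ : Fin r) (S.sym a b) ≠ 0 := by
  have hL : S.L a * S.L b ≠ 0 := mul_ne_zero (S.L_ne a) (S.L_ne b)
  rw [Setup.sym, map_smul, map_add, S.Dc_m_lead a b]
  by_cases hab : a % r = b % r
  · have hidx : (⟨a % r, Nat.mod_lt a S.rpos⟩ : Fin r)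
        = (⟨b % r, Nat.mod_lt b S.rpos⟩ : Fin r) := Fin.ext hab
    have hd := S.Dc_m_lead b a
    rw [Nat.add_comm (b / r) (a / r)] at hd
    rw [hidx] at hd ⊢
    rw [hd, smul_eq_mul, mul_comm (S.L b) (S.L a), ← two_mul, ← mul_assoc,
      inv_mul_cancel₀ S.h2, one_mul]
    exact hL
  · have hz : Dc (a / r + b / r) (⟨a % r, Nat.mod_lt a S.rpos⟩ : Fin r)
        (⟨b % r, Nat.mod_lt b S.rpos⟩ : Fin r) (S.m b ⊗ₜ[Polynomial F] S.m a) = 0 := by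
      by_contra hc
      have hw : b + a = (a / r + b / r) * r + (a % r) + (b % r) := by
        have h3 := Nat.div_add_mod a r
        have h4 := Nat.div_add_mod b r
        have h5 : (a / r + b / r) * r = r * (a / r) + r * (b / r) := by ring
        omega
      obtain ⟨e1, _, _⟩ := S.Dc_m_diag b a _ _ _ hw hc
      exact hab e1
    rw [hz]
    simp only [add_zero, smul_eq_mul]
    exact mul_ne_zero (inv_ne_zero S.h2) hL


lemma repr_sum (x : MM F r) :
    x = ∑ i : Fin r, ∑ j : Fin r, (coordT i j x) •
      ((Pi.single i 1 : Fin r → Polynomial F) ⊗ₜ[Polynomial F]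
        (Pi.single j 1 : Fin r → Polynomial F)) := by
  induction x using TensorProduct.induction_on with
  | zero => simp
  | tmul a b =>
    conv_lhs => rw [show a = ∑ i, (a i) •
        (Pi.single i (1 : Polynomial F) : Fin r → Polynomial F) from pi_decomp a,
      show b = ∑ j, (b j) •
        (Pi.single j (1 : Polynomial F) : Fin r → Polynomial F) from pi_decomp b]
    rw [sum_tmul]
    refine Finset.sum_congr rfl (fun i _ => ?_)
    rw [tmul_sum]
    refine Finset.sum_congr rfl (fun j _ => ?_)
    rw [coordT_tmul, smul_tmul', tmul_smul, smul_tmul', smul_smul, mul_comm (b j) (a i)]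
  | add x y hx hy =>
    conv_lhs => rw [hx, hy]
    rw [← Finset.sum_add_distrib]
    refine Finset.sum_congr rfl (fun i _ => ?_)
    rw [← Finset.sum_add_distrib]
    refine Finset.sum_congr rfl (fun j _ => ?_)
    rw [map_add, add_smul]

lemma monomial_smul_tensor (c : F) (n : ℕ) (z : MM F r) :
    (monomial n c : Polynomial F) • z = c • ((X ^ n : Polynomial F) • z) := by
  rw [← C_mul_X_pow_eq_monomial, mul_smul]
  rw [show (C c : Polynomial F) = algebraMap F (Polynomial F) c from rfl]
  rw [algebraMap_smul]

lemma exp_repr (x : MM F r) (N : ℕ) (hN : ∀ i j : Fin r, (coordT i j x).natDegree < N) :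
    x = ∑ n ∈ Finset.range N, ∑ i : Fin r, ∑ j : Fin r,
      (Dc n i j x) • (nuO n i j : MM F r) := by
  have e : ∀ i j : Fin r, (coordT i j x) •
      ((Pi.single i 1 : Fin r → Polynomial F) ⊗ₜ[Polynomial F]
        (Pi.single j 1 : Fin r → Polynomial F))
      = ∑ n ∈ Finset.range N, (Dc n i j x) • (nuO n i j : MM F r) := by
    intro i j
    conv_lhs => rw [Polynomial.as_sum_range' _ N (hN i j)]
    rw [Finset.sum_smul]
    refine Finset.sum_congr rfl (fun n _ => ?_)
    rw [monomial_smul_tensor]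
    rfl
  calc x = ∑ i : Fin r, ∑ j : Fin r, (coordT i j x) •
      ((Pi.single i 1 : Fin r → Polynomial F) ⊗ₜ[Polynomial F]
        (Pi.single j 1 : Fin r → Polynomial F)) := repr_sum x
  _ = ∑ i : Fin r, ∑ j : Fin r, ∑ n ∈ Finset.range N, (Dc n i j x) • (nuO n i j : MM F r) :=
      Finset.sum_congr rfl (fun i _ => Finset.sum_congr rfl (fun j _ => e i j))
  _ = ∑ i : Fin r, ∑ n ∈ Finset.range N, ∑ j : Fin r, (Dc n i j x) • (nuO n i j : MM F r) :=
      Finset.sum_congr rfl (fun i _ => Finset.sum_comm)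
  _ = ∑ n ∈ Finset.range N, ∑ i : Fin r, ∑ j : Fin r, (Dc n i j x) • (nuO n i j : MM F r) :=
      Finset.sum_comm

lemma exists_bound (x : MM F r) : ∃ N : ℕ, ∀ i j : Fin r, (coordT i j x).natDegree < N := by
  refine ⟨(Finset.univ.sup (fun p : Fin r × Fin r => (coordT p.1 p.2 x).natDegree)) + 1,
    fun i j => ?_⟩
  have := Finset.le_sup (f := fun p : Fin r × Fin r => (coordT p.1 p.2 x).natDegree)
    (Finset.mem_univ (i, j))
  exact Nat.lt_succ_of_le (by simpa using this)

/-- KEY2: a symmetric tensor whose `D`-coordinates vanish in weights `≥ s`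
lies in the span of the low-weight symmetric monomials. -/
lemma key2 (y : MM F r) (s : ℕ)
    (hsym : ∀ (n : ℕ) (i j : Fin r), Dc n i j y = Dc n j i y)
    (hvan : ∀ (n : ℕ) (i j : Fin r), s ≤ n * r + (i : ℕ) + (j : ℕ) → Dc n i j y = 0)
    (h2 : (2 : F) ≠ 0) :
    y ∈ Submodule.span F
      {z : MM F r | ∃ (n : ℕ) (i j : Fin r), n * r + (i : ℕ) + (j : ℕ) < s ∧ z = nu n i j} := by
  obtain ⟨N, hN⟩ := exists_bound y
  have hrepr : y = ∑ n ∈ Finset.range N, ∑ i : Fin r, ∑ j : Fin r,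
      ((2 : F)⁻¹ * Dc n i j y) • (nu n i j : MM F r) := by
    have step : ∀ n : ℕ, (∑ i : Fin r, ∑ j : Fin r,
          ((2 : F)⁻¹ * Dc n i j y) • (nu n i j : MM F r))
        = ∑ i : Fin r, ∑ j : Fin r, (Dc n i j y) • (nuO n i j : MM F r) := by
      intro n
      have e1 : ∀ i j : Fin r, ((2 : F)⁻¹ * Dc n i j y) • (nu n i j : MM F r)
          = ((2 : F)⁻¹ * Dc n i j y) • nuO n i j + ((2 : F)⁻¹ * Dc n i j y) • nuO n j i := by
        intro i j
        rw [nu_eq, smul_add]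
      simp_rw [e1, Finset.sum_add_distrib]
      have e2 : (∑ i : Fin r, ∑ j : Fin r, ((2 : F)⁻¹ * Dc n i j y) • (nuO n j i : MM F r))
          = ∑ i : Fin r, ∑ j : Fin r, ((2 : F)⁻¹ * Dc n i j y) • (nuO n i j : MM F r) := by
        rw [Finset.sum_comm]
        refine Finset.sum_congr rfl (fun i _ => ?_)
        refine Finset.sum_congr rfl (fun j _ => ?_)
        rw [hsym n j i]
      rw [e2, ← Finset.sum_add_distrib]
      refine Finset.sum_congr rfl (fun i _ => ?_)
      rw [← Finset.sum_add_distrib]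
      refine Finset.sum_congr rfl (fun j _ => ?_)
      rw [← add_smul]
      congr 1
      field_simp
      ring
    calc y = ∑ n ∈ Finset.range N, ∑ i : Fin r, ∑ j : Fin r,
          (Dc n i j y) • (nuO n i j : MM F r) :=
        exp_repr y N hN
    _ = _ := by
        refine Finset.sum_congr rfl (fun n _ => ?_)
        rw [step n]
  rw [hrepr]
  refine Submodule.sum_mem _ (fun n _ => Submodule.sum_mem _ (fun i _ =>
    Submodule.sum_mem _ (fun j _ => ?_)))
  by_cases hw : n * r + (i : ℕ) + (j : ℕ) < s
  · exact Submodule.smul_mem _ _ (Submodule.subset_span ⟨n, i, j, hw, rfl⟩)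
  · rw [hvan n i j (by omega), mul_zero, zero_smul]
    exact Submodule.zero_mem _


/-! ### Arithmetic: injectivity and surjectivity of the leading-monomial map -/

/-- Injectivity, matching-remainder case. -/
lemma injA {r a b a' b' ka kb ka' kb' i j : ℕ} (hr : 0 < r)
    (ha : a = r * ka + i) (hb : b = r * kb + j)
    (ha' : a' = r * ka' + i) (hb' : b' = r * kb' + j)
    (h1 : a ≤ b) (h2 : b ≤ a + r) (h1' : a' ≤ b') (h2' : b' ≤ a' + r)
    (hsum : a + b = a' + b') : a = a' ∧ b = b' := by
  have hK : ka + kb = ka' + kb' := by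
    have e1 : r * (ka + kb) = r * ka + r * kb := by ring
    have e2 : r * (ka' + kb') = r * ka' + r * kb' := by ring
    have e3 : r * (ka + kb) = r * (ka' + kb') := by omega
    exact Nat.eq_of_mul_eq_mul_left hr e3
  rcases lt_trichotomy ka ka' with hlt | heq | hgt
  · exfalso
    have m1 : r * (ka + 1) ≤ r * ka' := Nat.mul_le_mul_left r (by omega)
    have m1e : r * (ka + 1) = r * ka + r := by ring
    have m2 : r * (kb' + 1) ≤ r * kb := Nat.mul_le_mul_left r (by omega)
    have m2e : r * (kb' + 1) = r * kb' + r := by ring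
    omega
  · have hkb : kb = kb' := by omega
    rw [← heq] at ha'
    rw [← hkb] at hb'
    omega
  · exfalso
    have m1 : r * (ka' + 1) ≤ r * ka := Nat.mul_le_mul_left r (by omega)
    have m1e' : r * (ka' + 1) = r * ka' + r := by ring
    have m2 : r * (kb + 1) ≤ r * kb' := Nat.mul_le_mul_left r (by omega)
    have m2e : r * (kb + 1) = r * kb + r := by ring
    omega

/-- Injectivity of the leading monomial map on the admissible set of pairs. -/
lemma inj_main {r : ℕ} (hr : 0 < r) {a b a' b' : ℕ}
    (h1 : a ≤ b) (h2 : b ≤ a + r) (h1' : a' ≤ b') (h2' : b' ≤ a' + r)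
    (hsum : a + b = a' + b')
    (hmod : (a % r = a' % r ∧ b % r = b' % r) ∨ (a % r = b' % r ∧ b % r = a' % r)) :
    a = a' ∧ b = b' := by
  have Ha : a = r * (a / r) + a % r := (Nat.div_add_mod a r).symm
  have Hb : b = r * (b / r) + b % r := (Nat.div_add_mod b r).symm
  have Ha' : a' = r * (a' / r) + a' % r := (Nat.div_add_mod a' r).symm
  have Hb' : b' = r * (b' / r) + b' % r := (Nat.div_add_mod b' r).symm
  have hia : a % r < r := Nat.mod_lt a hr
  have hib : b % r < r := Nat.mod_lt b hr
  have hia' : a' % r < r := Nat.mod_lt a' hr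
  have hib' : b' % r < r := Nat.mod_lt b' hr
  rcases hmod with ⟨e1, e2⟩ | ⟨e1, e2⟩
  · exact injA (ka' := a' / r) (kb' := b' / r) hr Ha Hb (by omega) (by omega) h1 h2 h1' h2' hsum
  · -- crossed remainders
    rcases lt_trichotomy (a % r) (b % r) with hij | hij | hij
    · -- ia < ib : forces parity contradiction
      exfalso
      have hK : a / r + b / r = a' / r + b' / r := by
        have e3 : r * (a / r + b / r) = r * (a / r) + r * (b / r) := by ring
        have e4 : r * (a' / r + b' / r) = r * (a' / r) + r * (b' / r) := by ring
        have e5 : r * (a / r + b / r) = r * (a' / r + b' / r) := by omega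
        exact Nat.eq_of_mul_eq_mul_left hr e5
      -- ka = kb
      have c1 : b / r ≤ a / r := by
        by_contra hc
        have m : r * (a / r + 1) ≤ r * (b / r) := Nat.mul_le_mul_left r (by omega)
        have me : r * (a / r + 1) = r * (a / r) + r := by ring
        omega
      have c2 : a / r ≤ b / r := by
        by_contra hc
        have m : r * (b / r + 1) ≤ r * (a / r) := Nat.mul_le_mul_left r (by omega)
        have me : r * (b / r + 1) = r * (b / r) + r := by ring
        omega
      -- kb' = ka' + 1
      have c3 : a' / r + 1 ≤ b' / r := by
        by_contra hc
        have m : r * (b' / r) ≤ r * (a' / r) := Nat.mul_le_mul_left r (by omega)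
        omega
      have c4 : b' / r ≤ a' / r + 1 := by
        by_contra hc
        have m : r * (a' / r + 2) ≤ r * (b' / r) := Nat.mul_le_mul_left r (by omega)
        have me : r * (a' / r + 2) = r * (a' / r) + r + r := by ring
        omega
      omega
    · -- ia = ib : all remainders agree
      exact injA (ka' := a' / r) (kb' := b' / r) hr Ha Hb (by omega) (by omega)
        h1 h2 h1' h2' hsum
    · -- ia > ib
      exfalso
      have hK : a / r + b / r = a' / r + b' / r := by
        have e3 : r * (a / r + b / r) = r * (a / r) + r * (b / r) := by ring
        have e4 : r * (a' / r + b' / r) = r * (a' / r) + r * (b' / r) := by ring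
        have e5 : r * (a / r + b / r) = r * (a' / r + b' / r) := by omega
        exact Nat.eq_of_mul_eq_mul_left hr e5
      -- kb = ka + 1
      have c1 : a / r + 1 ≤ b / r := by
        by_contra hc
        have m : r * (b / r) ≤ r * (a / r) := Nat.mul_le_mul_left r (by omega)
        omega
      have c2 : b / r ≤ a / r + 1 := by
        by_contra hc
        have m : r * (a / r + 2) ≤ r * (b / r) := Nat.mul_le_mul_left r (by omega)
        have me : r * (a / r + 2) = r * (a / r) + r + r := by ring
        omega
      -- ka' = kb'
      have c3 : b' / r ≤ a' / r := by
        by_contra hc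
        have m : r * (a' / r + 1) ≤ r * (b' / r) := Nat.mul_le_mul_left r (by omega)
        have me : r * (a' / r + 1) = r * (a' / r) + r := by ring
        omega
      have c4 : a' / r ≤ b' / r := by
        by_contra hc
        have m : r * (b' / r + 1) ≤ r * (a' / r) := Nat.mul_le_mul_left r (by omega)
        have me : r * (b' / r + 1) = r * (b' / r) + r := by ring
        omega
      omega

/-- Surjectivity of the leading monomial map. -/
lemma surj_main {r : ℕ} (hr : 0 < r) (n i j : ℕ) (hi : i < r) (hj : j < r) (hij : i ≤ j) :
    ∃ a b : ℕ, a ≤ b ∧ b ≤ a + r ∧ a / r + b / r = n ∧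
      ((a % r = i ∧ b % r = j) ∨ (a % r = j ∧ b % r = i)) := by
  rcases Nat.even_or_odd n with ⟨c, hc⟩ | ⟨c, hc⟩
  · obtain ⟨hmi, hdi⟩ := mod_div_eq (r := r) (u := c) (i := i) hr hi
    obtain ⟨hmj, hdj⟩ := mod_div_eq (r := r) (u := c) (i := j) hr hj
    exact ⟨c * r + i, c * r + j, by omega, by omega, by omega, Or.inl ⟨hmi, hmj⟩⟩
  · obtain ⟨hmj, hdj⟩ := mod_div_eq (r := r) (u := c) (i := j) hr hj
    obtain ⟨hmi, hdi⟩ := mod_div_eq (r := r) (u := c + 1) (i := i) hr hi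
    have e : (c + 1) * r = c * r + r := by ring
    exact ⟨c * r + j, (c + 1) * r + i, by omega, by omega, by omega, Or.inr ⟨hmj, hmi⟩⟩


noncomputable def Setup.fam : ℕ × Fin (r + 1) → MM F r :=
  fun p => S.sym p.1 (p.1 + (p.2 : ℕ))

lemma Setup.weight_eq (a b : ℕ) :
    (a / r + b / r) * r + ((⟨a % r, Nat.mod_lt a S.rpos⟩ : Fin r) : ℕ)
      + ((⟨b % r, Nat.mod_lt b S.rpos⟩ : Fin r) : ℕ) = a + b := by
  have h3 := Nat.div_add_mod a r
  have h4 := Nat.div_add_mod b r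
  have h5 : (a / r + b / r) * r = r * (a / r) + r * (b / r) := by ring
  have e1 : ((⟨a % r, Nat.mod_lt a S.rpos⟩ : Fin r) : ℕ) = a % r := rfl
  have e2 : ((⟨b % r, Nat.mod_lt b S.rpos⟩ : Fin r) : ℕ) = b % r := rfl
  omega

/-- Linear independence of the family. -/
lemma Setup.indep : LinearIndependent F S.fam := by
  classical
  rw [linearIndependent_iff']
  intro t g hsum p hp
  by_contra hg
  have hPne : (t.filter (fun p => g p ≠ 0)).Nonempty :=
    ⟨p, Finset.mem_filter.mpr ⟨hp, hg⟩⟩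
  obtain ⟨p₀, hp₀, hmax⟩ := Finset.exists_max_image _
    (fun p : ℕ × Fin (r + 1) => 2 * p.1 + (p.2 : ℕ)) hPne
  obtain ⟨hp₀t, hg₀⟩ := Finset.mem_filter.mp hp₀
  set a := p₀.1 with ha_def
  set b := p₀.1 + (p₀.2 : ℕ) with hb_def
  set i₀ : Fin r := ⟨a % r, Nat.mod_lt a S.rpos⟩ with hi₀
  set j₀ : Fin r := ⟨b % r, Nat.mod_lt b S.rpos⟩ with hj₀
  set n₀ : ℕ := a / r + b / r with hn₀
  have hwt : n₀ * r + (i₀ : ℕ) + (j₀ : ℕ) = a + b := S.weight_eq a b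
  have happ := congrArg (Dc n₀ i₀ j₀) hsum
  rw [map_sum, map_zero] at happ
  rw [Finset.sum_eq_single_of_mem p₀ hp₀t] at happ
  · rw [map_smul, smul_eq_mul] at happ
    have hlead : Dc n₀ i₀ j₀ (S.fam p₀) ≠ 0 := S.Dc_sym_lead a b
    exact hg₀ (by
      rcases mul_eq_zero.mp happ with h | h
      · exact h
      · exact absurd h hlead)
  · intro p' hp't hne
    rw [map_smul, smul_eq_mul]
    by_cases hgz : g p' = 0
    · rw [hgz, zero_mul]
    · have hp'P : p' ∈ t.filter (fun p => g p ≠ 0) := Finset.mem_filter.mpr ⟨hp't, hgz⟩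
      have hle : 2 * p'.1 + (p'.2 : ℕ) ≤ 2 * p₀.1 + (p₀.2 : ℕ) := hmax p' hp'P
      set a' := p'.1 with ha'
      set b' := p'.1 + (p'.2 : ℕ) with hb'
      have hww : a' + b' ≤ a + b := by omega
      rcases Nat.lt_or_ge (a' + b') (a + b) with hlt | hge
      · rw [show S.fam p' = S.sym a' b' from rfl,
          S.Dc_sym_hi a' b' n₀ i₀ j₀ (by omega), mul_zero]
      · have heq : a' + b' = a + b := by omega
        by_cases hDz : Dc n₀ i₀ j₀ (S.sym a' b') = 0
        · rw [show S.fam p' = S.sym a' b' from rfl, hDz, mul_zero]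
        · exfalso
          obtain ⟨hmods, hdiv⟩ := S.Dc_sym_diag a' b' n₀ i₀ j₀ (by omega) hDz
          have hieq : (i₀ : ℕ) = a % r := rfl
          have hjeq : (j₀ : ℕ) = b % r := rfl
          have hr2 : (p'.2 : ℕ) ≤ r := by have := p'.2.2; omega
          have hr2' : (p₀.2 : ℕ) ≤ r := by have := p₀.2.2; omega
          have hab : a' = a ∧ b' = b := by
            apply inj_main S.rpos (by omega) (by omega) (by omega) (by omega) (by omega)
            rcases hmods with ⟨m1, m2⟩ | ⟨m1, m2⟩
            · exact Or.inl ⟨by omega, by omega⟩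
            · exact Or.inr ⟨by omega, by omega⟩
          apply hne
          have e1 : p'.1 = p₀.1 := hab.1
          have e2 : (p'.2 : ℕ) = (p₀.2 : ℕ) := by omega
          exact Prod.ext e1 (Fin.ext e2)


lemma Dc_nu_zero {n n' : ℕ} {i j i₀ j₀ : Fin r}
    (hD : ¬ (n' = n ∧ ((i = i₀ ∧ j = j₀) ∨ (i = j₀ ∧ j = i₀)))) :
    Dc n' i j (nu n i₀ j₀ : MM F r) = 0 := by
  rw [Dc_nu]
  by_cases e1 : n' = n
  · subst e1
    by_cases q : i₀ = j₀
    · subst q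
      by_cases f1 : i = i₀ <;> by_cases f2 : j = i₀ <;>
        simp [f1, f2] <;> (exfalso; apply hD; tauto)
    · by_cases f1 : i = i₀ <;> by_cases f2 : j = j₀ <;>
        by_cases f3 : i = j₀ <;> by_cases f4 : j = i₀ <;>
        simp [f1, f2, f3, f4, q, Ne.symm q] <;>
        first
          | (exfalso; apply hD; tauto)
          | (exact absurd (f1.symm.trans f3) q)
          | (exact absurd (f4.symm.trans f2) q)
  · simp [e1]

/-- Every symmetric monomial lies in the `F`-span of the family. -/
lemma Setup.nu_mem : ∀ (s : ℕ) (n : ℕ) (i j : Fin r), n * r + (i : ℕ) + (j : ℕ) = s →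
    (nu n i j : MM F r) ∈ Submodule.span F (Set.range S.fam) := by
  intro s
  induction s using Nat.strong_induction_on with
  | _ s ih =>
    intro n i j hs
    have hsurj : ∃ a b : ℕ, a ≤ b ∧ b ≤ a + r ∧ a / r + b / r = n ∧
        ((a % r = (i : ℕ) ∧ b % r = (j : ℕ)) ∨ (a % r = (j : ℕ) ∧ b % r = (i : ℕ))) := by
      rcases le_total (i : ℕ) (j : ℕ) with h | h
      · exact surj_main S.rpos n (i : ℕ) (j : ℕ) i.2 j.2 h
      · obtain ⟨a, b, h1, h2, h3, h4⟩ := surj_main S.rpos n (j : ℕ) (i : ℕ) j.2 i.2 h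
        exact ⟨a, b, h1, h2, h3, h4.symm⟩
    obtain ⟨a, b, hab, hbar, hdiv, hmods⟩ := hsurj
    set i₀ : Fin r := ⟨a % r, Nat.mod_lt a S.rpos⟩ with hi₀
    set j₀ : Fin r := ⟨b % r, Nat.mod_lt b S.rpos⟩ with hj₀
    have g1 : (i₀ : ℕ) = a % r := rfl
    have g2 : (j₀ : ℕ) = b % r := rfl
    have hnu : (nu n i j : MM F r) = nu n i₀ j₀ := by
      rcases hmods with ⟨m1, m2⟩ | ⟨m1, m2⟩
      · rw [show i₀ = i from Fin.ext m1, show j₀ = j from Fin.ext m2]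
      · rw [show i₀ = j from Fin.ext m1, show j₀ = i from Fin.ext m2, nu_symm]
    rw [hnu]
    have hwt : n * r + (i₀ : ℕ) + (j₀ : ℕ) = a + b := by
      rw [← hdiv]
      exact S.weight_eq a b
    have habs : a + b = s := by
      rcases hmods with ⟨m1, m2⟩ | ⟨m1, m2⟩ <;> omega
    have hc : Dc n i₀ j₀ (S.sym a b) ≠ 0 := by
      rw [← hdiv]
      exact S.Dc_sym_lead a b
    set c : F := Dc n i₀ j₀ (S.sym a b) with hcdef
    set c' : F := if i₀ = j₀ then (2 : F)⁻¹ * c else c with hc'def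
    have hc' : c' ≠ 0 := by
      by_cases h : i₀ = j₀
      · rw [hc'def, if_pos h]
        exact mul_ne_zero (inv_ne_zero S.h2) hc
      · rw [hc'def, if_neg h]
        exact hc
    set y : MM F r := S.sym a b - c' • (nu n i₀ j₀ : MM F r) with hydef
    have hysym : ∀ (n' : ℕ) (i' j' : Fin r), Dc n' i' j' y = Dc n' j' i' y := by
      intro n' i' j'
      rw [hydef, map_sub, map_sub, map_smul, map_smul, S.Dc_sym_symm n' i' j' a b,
        Dc_nu, Dc_nu]
      ring
    have hyvan : ∀ (n' : ℕ) (i' j' : Fin r),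
        a + b ≤ n' * r + (i' : ℕ) + (j' : ℕ) → Dc n' i' j' y = 0 := by
      intro n' i' j' hw
      rw [hydef, map_sub, map_smul, smul_eq_mul]
      by_cases hD : n' = n ∧ ((i' = i₀ ∧ j' = j₀) ∨ (i' = j₀ ∧ j' = i₀))
      · obtain ⟨rfl, hor⟩ := hD
        have hDnu : Dc n' i' j' (nu n' i₀ j₀ : MM F r)
            = 1 + (if i₀ = j₀ then (1 : F) else 0) := by
          by_cases hq : i₀ = j₀
          · rcases hor with ⟨h1, h2⟩ | ⟨h1, h2⟩ <;>
              rw [h1, h2] <;> simp [Dc_nu, hq]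
          · rcases hor with ⟨h1, h2⟩ | ⟨h1, h2⟩ <;> rw [h1, h2] <;>
              simp [Dc_nu, hq, Ne.symm hq]
        have hDsym : Dc n' i' j' (S.sym a b) = c := by
          rcases hor with ⟨h1, h2⟩ | ⟨h1, h2⟩
          · rw [h1, h2, hcdef]
          · rw [h1, h2, hcdef]
            exact S.Dc_sym_symm n' j₀ i₀ a b
        rw [hDsym, hDnu]
        by_cases hq : i₀ = j₀
        · rw [hc'def, if_pos hq, if_pos hq]
          have h11 : (2 : F)⁻¹ * c * (1 + 1) = c := by
            have e11 : (1 : F) + 1 = 2 := by norm_num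
            rw [e11, mul_comm ((2 : F)⁻¹) c, mul_assoc, inv_mul_cancel₀ S.h2, mul_one]
          rw [h11, sub_self]
        · rw [hc'def, if_neg hq, if_neg hq]
          ring
      · have hsymz : Dc n' i' j' (S.sym a b) = 0 := by
          rcases Nat.eq_or_lt_of_le hw with heq | hlt
          · by_contra hcz
            obtain ⟨hm, hd⟩ := S.Dc_sym_diag a b n' i' j' heq hcz
            apply hD
            refine ⟨by omega, ?_⟩
            rcases hm with ⟨m1, m2⟩ | ⟨m1, m2⟩
            · exact Or.inl ⟨Fin.ext m1, Fin.ext m2⟩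
            · exact Or.inr ⟨Fin.ext m1, Fin.ext m2⟩
          · exact S.Dc_sym_hi a b n' i' j' hlt
        rw [hsymz, Dc_nu_zero hD, mul_zero, sub_zero]
    have hyin := key2 y (a + b) hysym hyvan S.h2
    have hlow : {z : MM F r | ∃ (n' : ℕ) (i' j' : Fin r),
        n' * r + (i' : ℕ) + (j' : ℕ) < a + b ∧ z = nu n' i' j'} ⊆
        (Submodule.span F (Set.range S.fam) : Set (MM F r)) := by
      rintro z ⟨n', i', j', hw, rfl⟩
      exact ih (n' * r + (i' : ℕ) + (j' : ℕ)) (by omega) n' i' j' rfl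
    have hy : y ∈ Submodule.span F (Set.range S.fam) :=
      Submodule.span_le.mpr hlow hyin
    have hsmem : S.sym a b ∈ Submodule.span F (Set.range S.fam) := by
      apply Submodule.subset_span
      refine ⟨(a, (⟨b - a, by omega⟩ : Fin (r + 1))), ?_⟩
      show S.sym a (a + (b - a)) = S.sym a b
      rw [show a + (b - a) = b from by omega]
    have hfin : (nu n i₀ j₀ : MM F r) = c'⁻¹ • (S.sym a b - y) := by
      rw [hydef, sub_sub_cancel, inv_smul_smul₀ hc']
    rw [hfin]
    exact Submodule.smul_mem _ _ (Submodule.sub_mem _ hsmem hy)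


/-! ### Spanning -/

def nuSet (F : Type) [Field F] (r : ℕ) : Set (MM F r) :=
  {z | ∃ (n : ℕ) (i j : Fin r), z = nu n i j}

lemma nu_zero_eq (i j : Fin r) : (nu 0 i j : MM F r) =
    (Pi.single i 1 : Fin r → Polynomial F) ⊗ₜ[Polynomial F]
      (Pi.single j 1 : Fin r → Polynomial F)
    + (Pi.single j 1 : Fin r → Polynomial F) ⊗ₜ[Polynomial F]
      (Pi.single i 1 : Fin r → Polynomial F) := by
  rw [nu, pow_zero, one_smul]

lemma smul_nu_mem (f : Polynomial F) (n : ℕ) (i j : Fin r) :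
    f • (nu n i j : MM F r) ∈ Submodule.span F (nuSet F r) := by
  have hterm : ∀ (k : ℕ) (c : F), (monomial k c : Polynomial F) • (nu n i j : MM F r)
      = c • (nu (k + n) i j : MM F r) := by
    intro k c
    rw [nu, nu, smul_smul, ← C_mul_X_pow_eq_monomial, mul_assoc, ← pow_add, mul_smul]
    rw [show (C c : Polynomial F) = algebraMap F (Polynomial F) c from rfl, algebraMap_smul]
  rw [show f • (nu n i j : MM F r) = ∑ k ∈ Finset.range (f.natDegree + 1),
      (monomial k (f.coeff k) : Polynomial F) • (nu n i j : MM F r) from by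
    conv_lhs => rw [Polynomial.as_sum_range' f (f.natDegree + 1) (Nat.lt_succ_self _)]
    rw [Finset.sum_smul]]
  refine Submodule.sum_mem _ (fun k _ => ?_)
  rw [hterm]
  exact Submodule.smul_mem _ _ (Submodule.subset_span ⟨k + n, i, j, rfl⟩)

lemma span_nu_smul_closed (f : Polynomial F) (x : MM F r)
    (hx : x ∈ Submodule.span F (nuSet F r)) :
    f • x ∈ Submodule.span F (nuSet F r) := by
  induction hx using Submodule.span_induction with
  | mem z hz =>
    obtain ⟨n, i, j, rfl⟩ := hz
    exact smul_nu_mem f n i j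
  | zero => rw [smul_zero]; exact Submodule.zero_mem _
  | add u v _ _ hu hv => rw [smul_add]; exact Submodule.add_mem _ hu hv
  | smul c u _ hu =>
    rw [smul_comm]
    exact Submodule.smul_mem _ _ hu

/-- The `F[t]`-submodule structure on the `F`-span of the symmetric monomials. -/
noncomputable def nuSpan (F : Type) [Field F] (r : ℕ) : Submodule (Polynomial F) (MM F r) where
  carrier := (Submodule.span F (nuSet F r) : Set (MM F r))
  zero_mem' := Submodule.zero_mem _
  add_mem' := fun h1 h2 => Submodule.add_mem _ h1 h2
  smul_mem' := fun f x hx => span_nu_smul_closed f x hx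

lemma genS_expand (a b : Fin r → Polynomial F) :
    a ⊗ₜ[Polynomial F] b + b ⊗ₜ[Polynomial F] a ∈ Submodule.span F (nuSet F r) := by
  have ha : a ⊗ₜ[Polynomial F] b = ∑ i : Fin r, ∑ j : Fin r, (a i * b j) •
      ((Pi.single i 1 : Fin r → Polynomial F) ⊗ₜ[Polynomial F]
        (Pi.single j 1 : Fin r → Polynomial F)) := by
    conv_lhs => rw [repr_sum (a ⊗ₜ[Polynomial F] b)]
    refine Finset.sum_congr rfl (fun i _ => Finset.sum_congr rfl (fun j _ => ?_))
    rw [coordT_tmul]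
  have hb : b ⊗ₜ[Polynomial F] a = ∑ i : Fin r, ∑ j : Fin r, (a i * b j) •
      ((Pi.single j 1 : Fin r → Polynomial F) ⊗ₜ[Polynomial F]
        (Pi.single i 1 : Fin r → Polynomial F)) := by
    conv_lhs => rw [repr_sum (b ⊗ₜ[Polynomial F] a)]
    rw [Finset.sum_comm]
    refine Finset.sum_congr rfl (fun i _ => Finset.sum_congr rfl (fun j _ => ?_))
    rw [coordT_tmul, mul_comm]
  rw [ha, hb, ← Finset.sum_add_distrib]
  refine Submodule.sum_mem _ (fun i _ => ?_)
  rw [← Finset.sum_add_distrib]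
  refine Submodule.sum_mem _ (fun j _ => ?_)
  rw [← smul_add, ← nu_zero_eq]
  exact span_nu_smul_closed _ _ (Submodule.subset_span ⟨0, i, j, rfl⟩)

/-- The two spans coincide as sets. -/
lemma Setup.span_eq :
    (Submodule.span F (Set.range S.fam) : Set (MM F r)) =
      (Submodule.span (Polynomial F) {x : MM F r | ∃ a b : Fin r → Polynomial F,
        x = a ⊗ₜ[Polynomial F] b + b ⊗ₜ[Polynomial F] a} : Set (MM F r)) := by
  apply Set.Subset.antisymm
  · have hle : Submodule.span F (Set.range S.fam) ≤
        (Submodule.span (Polynomial F) {x : MM F r | ∃ a b : Fin r → Polynomial F,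
          x = a ⊗ₜ[Polynomial F] b + b ⊗ₜ[Polynomial F] a}).restrictScalars F := by
      rw [Submodule.span_le]
      rintro z ⟨p, rfl⟩
      have hmem : (S.m p.1 ⊗ₜ[Polynomial F] S.m (p.1 + (p.2 : ℕ))
          + S.m (p.1 + (p.2 : ℕ)) ⊗ₜ[Polynomial F] S.m p.1) ∈
          Submodule.span (Polynomial F) {x : MM F r | ∃ a b : Fin r → Polynomial F,
            x = a ⊗ₜ[Polynomial F] b + b ⊗ₜ[Polynomial F] a} :=
        Submodule.subset_span ⟨S.m p.1, S.m (p.1 + (p.2 : ℕ)), rfl⟩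
      exact Submodule.smul_mem ((Submodule.span (Polynomial F) _).restrictScalars F)
        ((2 : F)⁻¹) hmem
    exact fun z hz => hle hz
  · have h1 : Submodule.span (Polynomial F) {x : MM F r | ∃ a b : Fin r → Polynomial F,
        x = a ⊗ₜ[Polynomial F] b + b ⊗ₜ[Polynomial F] a} ≤ nuSpan F r := by
      rw [Submodule.span_le]
      rintro z ⟨a, b, rfl⟩
      exact genS_expand a b
    have h2 : Submodule.span F (nuSet F r) ≤ Submodule.span F (Set.range S.fam) := by
      rw [Submodule.span_le]
      rintro z ⟨n, i, j, rfl⟩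
      exact S.nu_mem (n * r + (i : ℕ) + (j : ℕ)) n i j rfl
    intro z hz
    exact h2 (h1 hz)

end SymSqAux


open SymSqAux

/-- **The symmetrized basis is a free `F[τ]`-basis of `Sym²` of the `t`-motive of `φ`.**
Model the `t`-motive of the rank-`r` Drinfeld module `φ_t = θ + κ₁τ + ⋯ + κ_rτ^r` as
`M = F[t]^r` with its semilinear map `τ` (determined on the standard basis as in the
`t`-motive of `φ`), and let `τ₂` denote the induced map on `M ⊗_{F[t]} M`.  With
`m_i = τ^i(b₁)`, `ξ₀ = m₀⊗m₀` and `ξ_i = ½(m₀⊗m_i + m_i⊗m₀)` for `1 ≤ i ≤ r`, the family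
`τ₂^k(ξ_i)` (`k ∈ ℕ`, `0 ≤ i ≤ r`) is `F`-linearly independent and its `F`-span equals
the `F[t]`-submodule `Sym²M` spanned by all `a⊗b + b⊗a`. -/
theorem symSquare_tMotive_basis
    (p : ℕ) [Fact p.Prime] (hp : p ≠ 2)
    (q : ℕ) (hq : ∃ n : ℕ, 0 < n ∧ q = p ^ n)
    (F : Type) [Field F] [CharP F p]
    (r : ℕ) (hr : 1 ≤ r)
    (θ : F) (κ : Fin r → F) (hκr : κ ⟨r - 1, by omega⟩ ≠ 0)
    -- the q-power Frobenius on F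
    (φq : F →+* F) (hφq : ∀ x : F, φq x = x ^ q)
    -- the semilinear map τ on M = F[t]^r, determined by its values on the basis
    (τ : (Fin r → Polynomial F) → (Fin r → Polynomial F))
    (hτadd : ∀ x y, τ (x + y) = τ x + τ y)
    (hτsemi : ∀ (f : Polynomial F) (v : Fin r → Polynomial F),
      τ (f • v) = (f.map φq) • τ v)
    (hτstep : ∀ i : Fin r, ∀ h : (i : ℕ) + 1 < r,
      τ (Pi.single i (1 : Polynomial F)) = Pi.single (⟨(i : ℕ) + 1, h⟩ : Fin r) 1)
    (hτlast : τ (Pi.single (⟨r - 1, by omega⟩ : Fin r) (1 : Polynomial F)) =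
      (κ ⟨r - 1, by omega⟩)⁻¹ •
        ((Polynomial.X - Polynomial.C θ) •
            (Pi.single (⟨0, by omega⟩ : Fin r) 1 : Fin r → Polynomial F)
          - ∑ j : Fin (r - 1),
              Polynomial.C (κ ⟨(j : ℕ), by have := j.2; omega⟩) •
                (Pi.single (⟨(j : ℕ) + 1, by have := j.2; omega⟩ : Fin r) 1 :
                  Fin r → Polynomial F)))
    -- the induced map on M ⊗_{F[t]} M
    (τ₂ : (Fin r → Polynomial F) ⊗[Polynomial F] (Fin r → Polynomial F) →
          (Fin r → Polynomial F) ⊗[Polynomial F] (Fin r → Polynomial F))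
    (hτ₂add : ∀ x y, τ₂ (x + y) = τ₂ x + τ₂ y)
    (hτ₂tmul : ∀ a b : Fin r → Polynomial F,
      τ₂ (a ⊗ₜ[Polynomial F] b) = τ a ⊗ₜ[Polynomial F] τ b)
    -- m₀ = b₁ and the symmetrized vectors ξ_i
    (m0 : Fin r → Polynomial F) (hm0 : m0 = Pi.single (⟨0, by omega⟩ : Fin r) 1)
    (ξ : Fin (r + 1) →
      (Fin r → Polynomial F) ⊗[Polynomial F] (Fin r → Polynomial F))
    (hξ0 : ξ ⟨0, by omega⟩ = m0 ⊗ₜ[Polynomial F] m0)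
    (hξ : ∀ i : Fin (r + 1), 1 ≤ (i : ℕ) →
      ξ i = (2 : F)⁻¹ • (m0 ⊗ₜ[Polynomial F] (τ^[(i : ℕ)] m0)
        + (τ^[(i : ℕ)] m0) ⊗ₜ[Polynomial F] m0))
    (fam : ℕ × Fin (r + 1) →
      (Fin r → Polynomial F) ⊗[Polynomial F] (Fin r → Polynomial F))
    (hfam : ∀ (k : ℕ) (i : Fin (r + 1)), fam (k, i) = τ₂^[k] (ξ i)) :
    LinearIndependent F fam ∧
      (Submodule.span F (Set.range fam) :
          Set ((Fin r → Polynomial F) ⊗[Polynomial F] (Fin r → Polynomial F)))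
        = (Submodule.span (Polynomial F)
            {x : (Fin r → Polynomial F) ⊗[Polynomial F] (Fin r → Polynomial F) |
              ∃ a b : Fin r → Polynomial F,
                x = a ⊗ₜ[Polynomial F] b + b ⊗ₜ[Polynomial F] a} :
          Set ((Fin r → Polynomial F) ⊗[Polynomial F] (Fin r → Polynomial F))) := by
  -- 2 is invertible
  have hp2 : (2 : F) ≠ 0 := by
    intro h
    have hcast : ((2 : ℕ) : F) = 0 := by exact_mod_cast h
    have hdvd : p ∣ 2 := (CharP.cast_eq_zero_iff F p 2).mp hcast
    have hle := Nat.le_of_dvd (by norm_num) hdvd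
    have hge := (Fact.out : p.Prime).two_le
    omega
  -- the Frobenius fixes 2⁻¹
  have hpow2 : ∀ m : ℕ, (2 : F) ^ (p ^ m) = 2 := by
    intro m
    induction m with
    | zero => simp
    | succ m ihm =>
      have hstep : ((2 : F) ^ (p ^ m)) ^ p = 2 ^ p := by rw [ihm]
      have h2p : (2 : F) ^ p = 2 := by
        have hh := add_pow_char (1 : F) 1 p
        norm_num at hh
        exact hh
      rw [pow_succ, pow_mul, ihm, h2p]
  have hhalf : φq ((2 : F)⁻¹) = (2 : F)⁻¹ := by
    obtain ⟨nn, _, hqeq⟩ := hq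
    rw [map_inv₀, hφq, hqeq, hpow2]
  -- the setup
  set S : Setup F r :=
    ⟨hr, hp2, θ, κ, hκr, φq, τ, hτadd, hτsemi, hτstep, hτlast⟩ with hS
  have hm : ∀ a : ℕ, S.m a = τ^[a] m0 := by
    intro a
    rw [hm0]
    rfl
  have hsymdef : ∀ a b : ℕ, S.sym a b = (2 : F)⁻¹ •
      (S.m a ⊗ₜ[Polynomial F] S.m b + S.m b ⊗ₜ[Polynomial F] S.m a) := fun a b => rfl
  -- iterates on pure tensors
  have B0 : ∀ (k : ℕ) (x y : Fin r → Polynomial F),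
      τ₂^[k] (x ⊗ₜ[Polynomial F] y) = (τ^[k] x) ⊗ₜ[Polynomial F] (τ^[k] y) := by
    intro k
    induction k with
    | zero => intro x y; rfl
    | succ k ihk =>
      intro x y
      rw [Function.iterate_succ_apply' τ₂, ihk, hτ₂tmul,
        ← Function.iterate_succ_apply' τ, ← Function.iterate_succ_apply' τ]
  -- single step on symmetrized tensors
  have Bstep : ∀ u v : Fin r → Polynomial F,
      τ₂ ((2 : F)⁻¹ • (u ⊗ₜ[Polynomial F] v + v ⊗ₜ[Polynomial F] u))
        = (2 : F)⁻¹ • (τ u ⊗ₜ[Polynomial F] τ v + τ v ⊗ₜ[Polynomial F] τ u) := by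
    intro u v
    have hsm : ∀ x y : Fin r → Polynomial F,
        τ₂ ((2 : F)⁻¹ • (x ⊗ₜ[Polynomial F] y))
          = (2 : F)⁻¹ • (τ x ⊗ₜ[Polynomial F] τ y) := by
      intro x y
      rw [smul_tmul']
      rw [show (2 : F)⁻¹ • x = (Polynomial.C ((2 : F)⁻¹)) • x from
        (algebraMap_smul (Polynomial F) ((2 : F)⁻¹) x).symm]
      rw [hτ₂tmul, hτsemi, Polynomial.map_C, hhalf]
      rw [show (Polynomial.C ((2 : F)⁻¹)) • τ x = (2 : F)⁻¹ • τ x from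
        algebraMap_smul (Polynomial F) ((2 : F)⁻¹) (τ x)]
      rw [smul_tmul']
    rw [smul_add, hτ₂add, hsm, hsm, smul_add]
  -- iterated version
  have Bsym : ∀ (k : ℕ) (u v : Fin r → Polynomial F),
      τ₂^[k] ((2 : F)⁻¹ • (u ⊗ₜ[Polynomial F] v + v ⊗ₜ[Polynomial F] u))
        = (2 : F)⁻¹ • ((τ^[k] u) ⊗ₜ[Polynomial F] (τ^[k] v)
          + (τ^[k] v) ⊗ₜ[Polynomial F] (τ^[k] u)) := by
    intro k
    induction k with
    | zero => intro u v; rfl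
    | succ k ihk =>
      intro u v
      rw [Function.iterate_succ_apply' τ₂, ihk, Bstep,
        ← Function.iterate_succ_apply' τ, ← Function.iterate_succ_apply' τ]
  -- the family agrees with the abstract one
  have hfam_eq : fam = S.fam := by
    funext prq
    obtain ⟨k, i⟩ := prq
    rw [hfam]
    by_cases hi : (i : ℕ) = 0
    · have : i = (⟨0, by omega⟩ : Fin (r + 1)) := Fin.ext hi
      rw [this, hξ0]
      show τ₂^[k] (m0 ⊗ₜ[Polynomial F] m0) = S.sym k (k + ((⟨0, by omega⟩ : Fin (r + 1)) : ℕ))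
      rw [B0, hsymdef]
      have hk0 : k + ((⟨0, by omega⟩ : Fin (r + 1)) : ℕ) = k := by omega
      rw [hk0, hm]
      have hx : (τ^[k] m0) ⊗ₜ[Polynomial F] (τ^[k] m0)
          + (τ^[k] m0) ⊗ₜ[Polynomial F] (τ^[k] m0)
          = (2 : F) • ((τ^[k] m0) ⊗ₜ[Polynomial F] (τ^[k] m0)) := (two_smul F _).symm
      rw [hx, smul_smul, inv_mul_cancel₀ hp2, one_smul]
    · rw [hξ i (by omega), Bsym]
      rw [show S.fam (k, i) = S.sym k (k + (i : ℕ)) from rfl, hsymdef, hm, hm,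
        ← Function.iterate_add_apply τ k (i : ℕ) m0]
  refine ⟨?_, ?_⟩
  · rw [hfam_eq]
    exact S.indep
  · rw [hfam_eq]
    exact S.span_eq
end

section
/- The antisymmetrized basis gives a free basis of the alternating square of the t-motive of φ: let Alt²M ⊆ M ⊗_{F[t]} M be the F[t]-submodule spanned by all elements a⊗b − b⊗a with a, b ∈ M, and assume r ≥ 2. Then the family of vectors τ^k(ζ_i), for k ∈ ℕ and 1 ≤ i ≤ r−1, where ζ_i = (1/2)(m_0⊗m_i − m_i⊗m_0), is F-linearly independent and its F-span equals Alt²M; equivalently, the set {(1/2)(1⊗τ^i − τ^i⊗1) : 1 ≤ i ≤ r−1} is a free basis of Alt²(M_φ) as a module over the twisted polynomial ring F[τ]. -/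
open TensorProduct

noncomputable section
open Polynomial
namespace AltSqAux

variable {F : Type} [Field F] {r : ℕ}

/-- basis vector of `M = F[t]^r`, with junk value `0` out of range -/
def E (F : Type) [Field F] (r : ℕ) (a : ℕ) : Fin r → Polynomial F :=
  if h : a < r then Pi.single ⟨a, h⟩ 1 else 0

/-- antisymmetrized basis tensor -/
def wedge (F : Type) [Field F] (r : ℕ) (a b : ℕ) :
    (Fin r → Polynomial F) ⊗[Polynomial F] (Fin r → Polynomial F) :=
  E F r a ⊗ₜ E F r b - E F r b ⊗ₜ E F r a

/-- monomial `t^n • (e_a ∧ e_b)` -/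
def mono (F : Type) [Field F] (r : ℕ) (n a b : ℕ) :
    (Fin r → Polynomial F) ⊗[Polynomial F] (Fin r → Polynomial F) :=
  (X ^ n : Polynomial F) • wedge F r a b

lemma wedge_swap (a b : ℕ) : wedge F r a b = - wedge F r b a := by
  simp [wedge]

lemma wedge_self (a : ℕ) : wedge F r a a = 0 := by simp [wedge]

lemma mono_swap (n a b : ℕ) : mono F r n a b = - mono F r n b a := by
  rw [mono, mono, wedge_swap, smul_neg]

lemma mono_self (n a : ℕ) : mono F r n a a = 0 := by rw [mono, wedge_self, smul_zero]

lemma E_apply (a : ℕ) (ha : a < r) (i : Fin r) :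
    E F r a i = if a = (i : ℕ) then 1 else 0 := by
  rw [E, dif_pos ha, Pi.single_apply]
  simp [Fin.ext_iff, eq_comm]

/-- coordinate functional over `F[t]` -/
def coordL (F : Type) [Field F] (r : ℕ) (i j : Fin r) :
    ((Fin r → Polynomial F) ⊗[Polynomial F] (Fin r → Polynomial F)) →ₗ[Polynomial F]
      Polynomial F :=
  TensorProduct.lift (LinearMap.mk₂ (Polynomial F) (fun u v => u i * v j)
    (fun a b v => by simp [add_mul])
    (fun c a v => by simp [mul_assoc, Pi.smul_apply, smul_eq_mul])
    (fun a v w => by simp [mul_add])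
    (fun c a v => by simp [Pi.smul_apply, smul_eq_mul]; ring))

/-- coordinate functional over `F` extracting the coefficient of `t^n e_i ⊗ e_j` -/
def coordF (F : Type) [Field F] (r : ℕ) (n : ℕ) (i j : Fin r) :
    ((Fin r → Polynomial F) ⊗[Polynomial F] (Fin r → Polynomial F)) →ₗ[F] F :=
  (lcoeff F n) ∘ₗ ((coordL F r i j).restrictScalars F)

lemma coordL_tmul (i j : Fin r) (u v : Fin r → Polynomial F) :
    coordL F r i j (u ⊗ₜ v) = u i * v j := rfl

lemma coordL_wedge (a b : ℕ) (ha : a < r) (hb : b < r) (i j : Fin r) :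
    coordL F r i j (wedge F r a b) =
      (if a = (i : ℕ) ∧ b = (j : ℕ) then 1 else 0)
        - (if b = (i : ℕ) ∧ a = (j : ℕ) then 1 else 0) := by
  rw [wedge, map_sub, coordL_tmul, coordL_tmul, E_apply a ha, E_apply b hb,
    E_apply b hb, E_apply a ha]
  split_ifs <;> simp_all <;> omega

lemma coordF_mono_self (n a b : ℕ) (hab : a < b) (hb : b < r) :
    coordF F r n ⟨a, lt_trans hab hb⟩ ⟨b, hb⟩ (mono F r n a b) = 1 := by
  have := coordL_wedge (F := F) (r := r) a b (lt_trans hab hb) hb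
    ⟨a, lt_trans hab hb⟩ ⟨b, hb⟩
  simp only [coordF, mono, LinearMap.comp_apply, LinearMap.restrictScalars_apply,
    map_smul, this]
  simp [hab.ne, (lt_trans hab hb).ne', smul_eq_mul, coeff_X_pow, hab.ne']

lemma coordF_mono_ne (n a b n' a' b' : ℕ) (hab : a < b) (hb : b < r)
    (hab' : a' < b') (hb' : b' < r) (hne : (n, a, b) ≠ (n', a', b')) :
    coordF F r n ⟨a, lt_trans hab hb⟩ ⟨b, hb⟩ (mono F r n' a' b') = 0 := by
  have := coordL_wedge (F := F) (r := r) a' b' (lt_trans hab' hb') hb'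
    ⟨a, lt_trans hab hb⟩ ⟨b, hb⟩
  simp only [coordF, mono, LinearMap.comp_apply, LinearMap.restrictScalars_apply,
    map_smul, this]
  have hno : ¬ (b' = a ∧ a' = b) := by rintro ⟨h1, h2⟩; omega
  by_cases h1 : a' = a ∧ b' = b
  · have hnn : n ≠ n' := by rintro rfl; exact hne (by rw [h1.1, h1.2])
    have hne2 : ¬ (b = a ∧ a = b) := by omega
    simp [h1, hno, hne2, smul_eq_mul, coeff_X_pow, hnn, Ne.symm hnn]
  · simp [h1, hno, smul_eq_mul]


def lstep (r : ℕ) (p : ℕ × ℕ × ℕ) : ℕ × ℕ × ℕ :=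
  if p.2.2 + 1 < r then (p.1, p.2.1 + 1, p.2.2 + 1) else (p.1 + 1, 0, p.2.1 + 1)

def posn (r d : ℕ) : ℕ → ℕ × ℕ × ℕ
  | 0 => (0, 0, d)
  | k + 1 => lstep r (posn r d k)

/-- the invariant of the dynamics -/
def pinv (r d k n a b : ℕ) : Prop :=
  a < b ∧ b < r ∧ n * r + a + b = 2 * k + d ∧
    ((n % 2 = 0 ∧ b - a = d) ∨ (n % 2 = 1 ∧ (b - a) + d = r))

lemma lstep_nowrap {r n a b : ℕ} (h : b + 1 < r) :
    lstep r (n, a, b) = (n, a + 1, b + 1) := by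
  rw [lstep, if_pos]; exact h

lemma lstep_wrap {r n a b : ℕ} (h : ¬ b + 1 < r) :
    lstep r (n, a, b) = (n + 1, 0, a + 1) := by
  rw [lstep, if_neg]; exact h

lemma pinv_nowrap {r d k n a b : ℕ} (h : pinv r d k n a b) (hb : b + 1 < r) :
    pinv r d (k + 1) n (a + 1) (b + 1) := by
  obtain ⟨h1, h2, h3, h4⟩ := h
  exact ⟨by omega, by omega, by omega, by omega⟩

lemma pinv_wrap {r d k n a b : ℕ} (h : pinv r d k n a b) (hb : ¬ b + 1 < r) :
    pinv r d (k + 1) (n + 1) 0 (a + 1) := by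
  obtain ⟨h1, h2, h3, h4⟩ := h
  have hnr : (n + 1) * r = n * r + r := by ring
  exact ⟨by omega, by omega, by omega, by omega⟩

lemma posn_pinv {r d : ℕ} (hr : 2 ≤ r) (hd1 : 1 ≤ d) (hdr : d < r) (k : ℕ) :
    pinv r d k (posn r d k).1 (posn r d k).2.1 (posn r d k).2.2 := by
  induction k with
  | zero =>
      refine ⟨?_, ?_, ?_, Or.inl ⟨?_, ?_⟩⟩ <;> simp [posn] <;> omega
  | succ k ih =>
      rcases hEq : posn r d k with ⟨n, a, b⟩
      rw [hEq] at ih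
      by_cases hb : b + 1 < r
      · have : posn r d (k+1) = (n, a+1, b+1) := by rw [posn, hEq, lstep_nowrap hb]
        rw [this]
        exact pinv_nowrap ih hb
      · have : posn r d (k+1) = (n+1, 0, a+1) := by rw [posn, hEq, lstep_wrap hb]
        rw [this]
        exact pinv_wrap ih hb

lemma posn_inj {r d k d' k' : ℕ} (hr : 2 ≤ r) (hd1 : 1 ≤ d) (hdr : d < r)
    (hd1' : 1 ≤ d') (hdr' : d' < r) (h : posn r d k = posn r d' k') :
    d = d' ∧ k = k' := by
  have i1 := posn_pinv hr hd1 hdr (d := d) k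
  have i2 := posn_pinv hr hd1' hdr' (d := d') k'
  rw [h] at i1
  rcases hEq : posn r d' k' with ⟨n, a, b⟩
  rw [hEq] at i1 i2
  simp only at i1 i2
  obtain ⟨h1, h2, h3, h4⟩ := i1
  obtain ⟨g1, g2, g3, g4⟩ := i2
  omega

lemma posn_surj_aux {r d : ℕ} (hr : 2 ≤ r) (hd1 : 1 ≤ d) (hdr : d < r) :
    ∀ N n a b, n * r + a + b < N → a < b → b < r →
      ((n % 2 = 0 ∧ b - a = d) ∨ (n % 2 = 1 ∧ (b - a) + d = r)) →
      ∃ k, posn r d k = (n, a, b) := by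
  intro N
  induction N with
  | zero => omega
  | succ N ih =>
      intro n a b hF hab hbr hgap
      by_cases ha : 0 < a
      · obtain ⟨k, hk⟩ := ih n (a - 1) (b - 1) (by omega) (by omega) (by omega) (by omega)
        refine ⟨k + 1, ?_⟩
        rw [posn, hk, lstep_nowrap (show b - 1 + 1 < r by omega)]
        refine Prod.ext rfl (Prod.ext ?_ ?_) <;> simp <;> omega
      · by_cases hn : 0 < n
        · obtain ⟨m, rfl⟩ : ∃ m, n = m + 1 := ⟨n - 1, by omega⟩
          have hnr : (m + 1) * r = m * r + r := by ring
          obtain ⟨k, hk⟩ := ih m (b - 1) (r - 1)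
            (by omega) (by omega) (by omega) (by omega)
          refine ⟨k + 1, ?_⟩
          rw [posn, hk, lstep_wrap (show ¬ r - 1 + 1 < r by omega)]
          refine Prod.ext rfl (Prod.ext ?_ ?_) <;> simp <;> omega
        · refine ⟨0, ?_⟩
          rw [posn]
          refine Prod.ext ?_ (Prod.ext ?_ ?_) <;> simp <;> omega

lemma posn_surj {r : ℕ} (hr : 2 ≤ r) {n a b : ℕ} (hab : a < b) (hbr : b < r) :
    ∃ k d, 1 ≤ d ∧ d < r ∧ posn r d k = (n, a, b) := by
  by_cases hn : n % 2 = 0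
  · obtain ⟨k, hk⟩ := posn_surj_aux hr (d := b - a) (by omega) (by omega)
      (n * r + a + b + 1) n a b (by omega) hab hbr (by omega)
    exact ⟨k, b - a, by omega, by omega, hk⟩
  · obtain ⟨k, hk⟩ := posn_surj_aux hr (d := r - (b - a)) (by omega) (by omega)
      (n * r + a + b + 1) n a b (by omega) hab hbr (by omega)
    exact ⟨k, r - (b - a), by omega, by omega, hk⟩


def SubN (F : Type) [Field F] (r N : ℕ) :
    Submodule F ((Fin r → Polynomial F) ⊗[Polynomial F] (Fin r → Polynomial F)) :=
  Submodule.span F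
    {x | ∃ n a b, a < b ∧ b < r ∧ n * r + a + b < N ∧ x = mono F r n a b}

lemma mono_mem_SubN {F : Type} [Field F] {r : ℕ} {n a b N : ℕ}
    (hab : a < b) (hb : b < r) (h : n * r + a + b < N) :
    mono F r n a b ∈ SubN F r N :=
  Submodule.subset_span ⟨n, a, b, hab, hb, h, rfl⟩

lemma SubN_le {F : Type} [Field F] {r : ℕ} {N N' : ℕ} (h : N ≤ N') :
    SubN F r N ≤ SubN F r N' :=
  Submodule.span_mono (fun x ⟨n, a, b, h1, h2, h3, h4⟩ => ⟨n, a, b, h1, h2, h3.trans_le h, h4⟩)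

lemma CsmulW {F : Type} [Field F] {r : ℕ} (c : F)
    (x : (Fin r → Polynomial F) ⊗[Polynomial F] (Fin r → Polynomial F)) :
    c • x = (C c : Polynomial F) • x := by
  rw [← algebraMap_smul (Polynomial F) c x]; rfl

section tau

variable {F : Type} [Field F] {r : ℕ}
variable (q : ℕ) (φq : F →+* F)
variable (τ : (Fin r → Polynomial F) → (Fin r → Polynomial F))
variable (τ₂ : (Fin r → Polynomial F) ⊗[Polynomial F] (Fin r → Polynomial F) →
    (Fin r → Polynomial F) ⊗[Polynomial F] (Fin r → Polynomial F))

lemma mapX (n : ℕ) : (X ^ n : Polynomial F).map φq = X ^ n := by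
  rw [Polynomial.map_pow, map_X]

lemma tau2_zero (hτ₂add : ∀ x y, τ₂ (x + y) = τ₂ x + τ₂ y) : τ₂ 0 = 0 := by
  have := hτ₂add 0 0
  simpa using this.symm

lemma tau2_sub (hτ₂add : ∀ x y, τ₂ (x + y) = τ₂ x + τ₂ y) (x y) :
    τ₂ (x - y) = τ₂ x - τ₂ y := by
  have h := hτ₂add y (x - y)
  rw [add_sub_cancel] at h
  rw [h]; abel

lemma tau2_smul
    (hτsemi : ∀ (f : Polynomial F) (v : Fin r → Polynomial F),
      τ (f • v) = (f.map φq) • τ v)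
    (hτ₂add : ∀ x y, τ₂ (x + y) = τ₂ x + τ₂ y)
    (hτ₂tmul : ∀ a b : Fin r → Polynomial F, τ₂ (a ⊗ₜ b) = τ a ⊗ₜ τ b)
    (f : Polynomial F) (x) : τ₂ (f • x) = (f.map φq) • τ₂ x := by
  induction x using TensorProduct.induction_on with
  | zero => rw [smul_zero, tau2_zero τ₂ hτ₂add, smul_zero]
  | tmul u v => rw [smul_tmul', hτ₂tmul, hτ₂tmul, hτsemi, smul_tmul']
  | add x y hx hy => rw [smul_add, hτ₂add, hτ₂add, hx, hy, smul_add]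

lemma tau2_smulF (hφq : ∀ x : F, φq x = x ^ q)
    (hτsemi : ∀ (f : Polynomial F) (v : Fin r → Polynomial F),
      τ (f • v) = (f.map φq) • τ v)
    (hτ₂add : ∀ x y, τ₂ (x + y) = τ₂ x + τ₂ y)
    (hτ₂tmul : ∀ a b : Fin r → Polynomial F, τ₂ (a ⊗ₜ b) = τ a ⊗ₜ τ b)
    (c : F) (x) : τ₂ (c • x) = (c ^ q) • τ₂ x := by
  rw [CsmulW, CsmulW, tau2_smul φq τ τ₂ hτsemi hτ₂add hτ₂tmul, map_C, hφq]

lemma tau_E_step (hτstep : ∀ i : Fin r, ∀ h : (i : ℕ) + 1 < r,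
      τ (Pi.single i (1 : Polynomial F)) = Pi.single (⟨(i : ℕ) + 1, h⟩ : Fin r) 1)
    (a : ℕ) (h : a + 1 < r) : τ (E F r a) = E F r (a + 1) := by
  have ha : a < r := by omega
  rw [E, dif_pos ha, E, dif_pos h]
  exact hτstep ⟨a, ha⟩ h

/-- the non-wrapping step -/
lemma tau2_mono_step
    (hτsemi : ∀ (f : Polynomial F) (v : Fin r → Polynomial F),
      τ (f • v) = (f.map φq) • τ v)
    (hτ₂add : ∀ x y, τ₂ (x + y) = τ₂ x + τ₂ y)
    (hτ₂tmul : ∀ a b : Fin r → Polynomial F, τ₂ (a ⊗ₜ b) = τ a ⊗ₜ τ b)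
    (n a b : ℕ)
    (hEa : τ (E F r a) = E F r (a + 1)) (hEb : τ (E F r b) = E F r (b + 1)) :
    τ₂ (mono F r n a b) = mono F r n (a + 1) (b + 1) := by
  have h1 : mono F r n a b =
      ((X ^ n : Polynomial F) • E F r a) ⊗ₜ E F r b -
        ((X ^ n : Polynomial F) • E F r b) ⊗ₜ E F r a := by
    rw [mono, wedge, smul_sub, smul_tmul', smul_tmul']
  rw [h1, tau2_sub τ₂ hτ₂add, hτ₂tmul, hτ₂tmul, hτsemi, hτsemi, mapX, hEa, hEb,
    mono, wedge, smul_sub, smul_tmul', smul_tmul']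

/-- the wrapping step, as an identity -/
lemma tau2_mono_wrap (κr θc : F) (κc : Fin (r-1) → F)
    (hτsemi : ∀ (f : Polynomial F) (v : Fin r → Polynomial F),
      τ (f • v) = (f.map φq) • τ v)
    (hτ₂add : ∀ x y, τ₂ (x + y) = τ₂ x + τ₂ y)
    (hτ₂tmul : ∀ a b : Fin r → Polynomial F, τ₂ (a ⊗ₜ b) = τ a ⊗ₜ τ b)
    (n a : ℕ)
    (hEa : τ (E F r a) = E F r (a + 1))
    (hlast : τ (E F r (r-1)) =
      κr⁻¹ • ((X - C θc) • E F r 0 - ∑ j : Fin (r-1), C (κc j) • E F r ((j : ℕ) + 1))) :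
    τ₂ (mono F r n a (r-1)) = (-(κr⁻¹)) • mono F r (n+1) 0 (a+1) +
      ((κr⁻¹ * θc) • mono F r n 0 (a+1) +
        ∑ j : Fin (r-1), (κr⁻¹ * κc j) • mono F r n ((j : ℕ) + 1) (a+1)) := by
  have CsmulM : ∀ (c : F) (v : Fin r → Polynomial F), c • v = (C c : Polynomial F) • v :=
    fun c v => by rw [← algebraMap_smul (Polynomial F) c v]; rfl
  have h1 : mono F r n a (r-1) =
      ((X ^ n : Polynomial F) • E F r a) ⊗ₜ E F r (r-1) -
        ((X ^ n : Polynomial F) • E F r (r-1)) ⊗ₜ E F r a := by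
    rw [mono, wedge, smul_sub, smul_tmul', smul_tmul']
  rw [h1, tau2_sub τ₂ hτ₂add, hτ₂tmul, hτ₂tmul, hτsemi, hτsemi, mapX, hEa, hlast]
  simp only [CsmulW, CsmulM, mono, wedge, smul_sub, sub_tmul, tmul_sub, smul_tmul',
    tmul_smul, smul_smul, Finset.smul_sum, sum_tmul, tmul_sum, smul_add,
    Finset.sum_sub_distrib, pow_succ, sub_smul, add_smul, neg_smul, map_mul]
  rw [show (X:Polynomial F)^n * (X:Polynomial F) = X * X^n from mul_comm _ _]
  simp only [mul_comm (X ^ n : Polynomial F) _, mul_left_comm (X ^ n : Polynomial F) _,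
    mul_assoc]
  module

/-- the wrapping step: membership form -/
lemma tau2_mono_wrap_mem (hr : 2 ≤ r) (κr θc : F) (κc : Fin (r-1) → F)
    (hτsemi : ∀ (f : Polynomial F) (v : Fin r → Polynomial F),
      τ (f • v) = (f.map φq) • τ v)
    (hτ₂add : ∀ x y, τ₂ (x + y) = τ₂ x + τ₂ y)
    (hτ₂tmul : ∀ a b : Fin r → Polynomial F, τ₂ (a ⊗ₜ b) = τ a ⊗ₜ τ b)
    (n a : ℕ) (har : a + 1 < r)
    (hEa : τ (E F r a) = E F r (a + 1))
    (hlast : τ (E F r (r-1)) =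
      κr⁻¹ • ((X - C θc) • E F r 0 - ∑ j : Fin (r-1), C (κc j) • E F r ((j : ℕ) + 1))) :
    ∃ z ∈ SubN F r ((n+1) * r + (a+1)),
      τ₂ (mono F r n a (r-1)) = (-(κr⁻¹)) • mono F r (n+1) 0 (a+1) + z := by
  refine ⟨(κr⁻¹ * θc) • mono F r n 0 (a+1) +
      ∑ j : Fin (r-1), (κr⁻¹ * κc j) • mono F r n ((j : ℕ) + 1) (a+1), ?_,
    tau2_mono_wrap φq τ τ₂ κr θc κc hτsemi hτ₂add hτ₂tmul n a hEa hlast⟩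
  refine Submodule.add_mem _ (Submodule.smul_mem _ _ ?_) (Submodule.sum_mem _ fun j _ => ?_)
  · refine mono_mem_SubN (by omega) har ?_
    have : (n + 1) * r = n * r + r := by ring
    omega
  · have hj : (j : ℕ) < r - 1 := j.2
    have hnr : (n + 1) * r = n * r + r := by ring
    rcases lt_trichotomy ((j : ℕ) + 1) (a + 1) with h | h | h
    · exact Submodule.smul_mem _ _ (mono_mem_SubN h har (by omega))
    · rw [h, mono_self]
      exact Submodule.zero_mem _
    · rw [mono_swap]
      refine Submodule.smul_mem _ _ (Submodule.neg_mem _ ?_)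
      exact mono_mem_SubN h (by omega) (by omega)

end tau

section main

variable {F : Type} [Field F] {r : ℕ}
variable (q : ℕ) (φq : F →+* F)
variable (τ : (Fin r → Polynomial F) → (Fin r → Polynomial F))
variable (τ₂ : (Fin r → Polynomial F) ⊗[Polynomial F] (Fin r → Polynomial F) →
    (Fin r → Polynomial F) ⊗[Polynomial F] (Fin r → Polynomial F))
variable (κr θc : F) (κc : Fin (r-1) → F)

/-- `τ₂` maps `SubN N` into `SubN (N+2)` -/
lemma tau2_SubN (hr : 2 ≤ r)
    (hφq : ∀ x : F, φq x = x ^ q)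
    (hτsemi : ∀ (f : Polynomial F) (v : Fin r → Polynomial F),
      τ (f • v) = (f.map φq) • τ v)
    (hτstep : ∀ i : Fin r, ∀ h : (i : ℕ) + 1 < r,
      τ (Pi.single i (1 : Polynomial F)) = Pi.single (⟨(i : ℕ) + 1, h⟩ : Fin r) 1)
    (hlast : τ (E F r (r-1)) =
      κr⁻¹ • ((X - C θc) • E F r 0 - ∑ j : Fin (r-1), C (κc j) • E F r ((j : ℕ) + 1)))
    (hτ₂add : ∀ x y, τ₂ (x + y) = τ₂ x + τ₂ y)
    (hτ₂tmul : ∀ a b : Fin r → Polynomial F, τ₂ (a ⊗ₜ b) = τ a ⊗ₜ τ b)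
    (N : ℕ) {x} (hx : x ∈ SubN F r N) : τ₂ x ∈ SubN F r (N + 2) := by
  refine Submodule.span_induction
    (p := fun x _ => τ₂ x ∈ SubN F r (N + 2)) ?_ ?_ ?_ ?_ hx
  · rintro x ⟨n, a, b, hab, hbr, hF, rfl⟩
    by_cases hb1 : b + 1 < r
    · rw [tau2_mono_step φq τ τ₂ hτsemi hτ₂add hτ₂tmul n a b
        (tau_E_step τ hτstep a (by omega)) (tau_E_step τ hτstep b hb1)]
      exact mono_mem_SubN (by omega) hb1 (by omega)
    · have hb : b = r - 1 := by omega
      subst hb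
      obtain ⟨z, hz, heq⟩ := tau2_mono_wrap_mem φq τ τ₂ hr κr θc κc hτsemi hτ₂add
        hτ₂tmul n a (by omega) (tau_E_step τ hτstep a (by omega)) hlast
      rw [heq]
      have hnr : (n + 1) * r = n * r + r := by ring
      refine Submodule.add_mem _ (Submodule.smul_mem _ _ (mono_mem_SubN (by omega)
        (by omega) (by omega))) (SubN_le (by omega) hz)
  · show τ₂ 0 ∈ _
    rw [tau2_zero τ₂ hτ₂add]; exact Submodule.zero_mem _
  · intro x y _ _ hx hy
    show τ₂ (x + y) ∈ _
    rw [hτ₂add]; exact Submodule.add_mem _ hx hy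
  · intro c x _ hx
    show τ₂ (c • x) ∈ _
    rw [tau2_smulF q φq τ τ₂ hφq hτsemi hτ₂add hτ₂tmul]
    exact Submodule.smul_mem _ _ hx

/-- the key triangularity invariant -/
lemma key_invariant (hr : 2 ≤ r) (h2 : (2 : F) ≠ 0) (hκ : κr ≠ 0)
    (hφq : ∀ x : F, φq x = x ^ q)
    (hτsemi : ∀ (f : Polynomial F) (v : Fin r → Polynomial F),
      τ (f • v) = (f.map φq) • τ v)
    (hτstep : ∀ i : Fin r, ∀ h : (i : ℕ) + 1 < r,
      τ (Pi.single i (1 : Polynomial F)) = Pi.single (⟨(i : ℕ) + 1, h⟩ : Fin r) 1)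
    (hlast : τ (E F r (r-1)) =
      κr⁻¹ • ((X - C θc) • E F r 0 - ∑ j : Fin (r-1), C (κc j) • E F r ((j : ℕ) + 1)))
    (hτ₂add : ∀ x y, τ₂ (x + y) = τ₂ x + τ₂ y)
    (hτ₂tmul : ∀ a b : Fin r → Polynomial F, τ₂ (a ⊗ₜ b) = τ a ⊗ₜ τ b)
    (d : ℕ) (hd1 : 1 ≤ d) (hdr : d < r) (k : ℕ) :
    ∃ c : F, c ≠ 0 ∧ ∃ z ∈ SubN F r (2 * k + d),
      τ₂^[k] ((2 : F)⁻¹ • mono F r 0 0 d) =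
        c • mono F r (posn r d k).1 (posn r d k).2.1 (posn r d k).2.2 + z := by
  induction k with
  | zero =>
      refine ⟨(2 : F)⁻¹, inv_ne_zero h2, 0, Submodule.zero_mem _, ?_⟩
      rw [Function.iterate_zero_apply, posn, add_zero]
  | succ k ih =>
      obtain ⟨c, hc, z, hz, heq⟩ := ih
      obtain ⟨h1, h2', h3, _⟩ := posn_pinv hr hd1 hdr (d := d) k
      rcases hP : posn r d k with ⟨n, a, b⟩
      rw [hP] at heq h1 h2' h3
      simp only at h1 h2' h3
      have hτz : τ₂ z ∈ SubN F r (2 * (k + 1) + d) := by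
        have := tau2_SubN q φq τ τ₂ κr θc κc hr hφq hτsemi hτstep hlast hτ₂add
          hτ₂tmul (2 * k + d) hz
        exact SubN_le (by omega) this
      rw [Function.iterate_succ_apply', heq, hτ₂add,
        tau2_smulF q φq τ τ₂ hφq hτsemi hτ₂add hτ₂tmul]
      by_cases hb1 : b + 1 < r
      · have hPs : posn r d (k + 1) = (n, a + 1, b + 1) := by
          rw [posn, hP, lstep_nowrap hb1]
        rw [hPs, tau2_mono_step φq τ τ₂ hτsemi hτ₂add hτ₂tmul n a b
          (tau_E_step τ hτstep a (by omega)) (tau_E_step τ hτstep b hb1)]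
        exact ⟨c ^ q, pow_ne_zero _ hc, τ₂ z, hτz, rfl⟩
      · have hb : b = r - 1 := by omega
        subst hb
        have hPs : posn r d (k + 1) = (n + 1, 0, a + 1) := by
          rw [posn, hP, lstep_wrap hb1]
        obtain ⟨z₀, hz₀, heq₀⟩ := tau2_mono_wrap_mem φq τ τ₂ hr κr θc κc hτsemi hτ₂add
          hτ₂tmul n a (by omega) (tau_E_step τ hτstep a (by omega)) hlast
        rw [hPs, heq₀]
        refine ⟨c ^ q * (-(κr⁻¹)), by
          simp only [ne_eq, mul_eq_zero, neg_eq_zero, inv_eq_zero]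
          push_neg
          exact ⟨pow_ne_zero _ hc, hκ⟩, (c ^ q) • z₀ + τ₂ z, ?_, ?_⟩
        · refine Submodule.add_mem _ (Submodule.smul_mem _ _ (SubN_le ?_ hz₀)) hτz
          have hnr : (n + 1) * r = n * r + r := by ring
          omega
        · rw [smul_add, smul_smul]
          abel

end main

section spanstuff

variable {F : Type} [Field F] {r : ℕ}

lemma SubN_coord_zero {N n a b : ℕ} (hab : a < b) (hbr : b < r) (hN : N ≤ n * r + a + b)
    {x} (hx : x ∈ SubN F r N) :
    coordF F r n ⟨a, lt_trans hab hbr⟩ ⟨b, hbr⟩ x = 0 := by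
  suffices h : SubN F r N ≤ LinearMap.ker (coordF F r n ⟨a, lt_trans hab hbr⟩ ⟨b, hbr⟩) by
    exact LinearMap.mem_ker.mp (h hx)
  refine Submodule.span_le.mpr ?_
  rintro x ⟨n', a', b', hab', hbr', hF', rfl⟩
  refine LinearMap.mem_ker.mpr (coordF_mono_ne n a b n' a' b' hab hbr hab' hbr' ?_)
  rintro h
  obtain ⟨h1, h2, h3⟩ : n = n' ∧ a = a' ∧ b = b' := by
    rw [Prod.ext_iff, Prod.ext_iff] at h
    simpa using h
  subst h1; subst h2; subst h3
  omega

/-- the set of all monomials -/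
def MS (F : Type) [Field F] (r : ℕ) :
    Set ((Fin r → Polynomial F) ⊗[Polynomial F] (Fin r → Polynomial F)) :=
  {x | ∃ n a b, a < b ∧ b < r ∧ x = mono F r n a b}

lemma SubN_le_spanMS (N : ℕ) : SubN F r N ≤ Submodule.span F (MS F r) :=
  Submodule.span_mono (fun x ⟨n, a, b, h1, h2, _, h4⟩ => ⟨n, a, b, h1, h2, h4⟩)

lemma mono_zero (a b : ℕ) : mono F r 0 a b = wedge F r a b := by
  rw [mono, pow_zero, one_smul]

lemma monomial_smul_mono (m n a b : ℕ) (c : F) :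
    (monomial m c : Polynomial F) • mono F r n a b = c • mono F r (m + n) a b := by
  rw [mono, mono, smul_smul, ← C_mul_X_pow_eq_monomial, mul_assoc, ← pow_add,
    mul_smul, ← CsmulW]

lemma smul_mem_spanMS (f : Polynomial F) {x} (hx : x ∈ Submodule.span F (MS F r)) :
    f • x ∈ Submodule.span F (MS F r) := by
  refine Submodule.span_induction
    (p := fun x _ => f • x ∈ Submodule.span F (MS F r)) ?_ ?_ ?_ ?_ hx
  · rintro x ⟨n, a, b, hab, hbr, rfl⟩
    have hf : f • mono F r n a b =
        ∑ m ∈ f.support, (monomial m (f.coeff m)) • mono F r n a b := by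
      rw [← Finset.sum_smul, ← f.as_sum_support]
    rw [hf]
    refine Submodule.sum_mem _ fun m _ => ?_
    rw [monomial_smul_mono]
    exact Submodule.smul_mem _ _ (Submodule.subset_span ⟨m + n, a, b, hab, hbr, rfl⟩)
  · show f • (0 : (Fin r → Polynomial F) ⊗[Polynomial F] (Fin r → Polynomial F)) ∈ _
    rw [smul_zero]; exact Submodule.zero_mem _
  · intro x y _ _ hx hy
    show f • (x + y) ∈ _
    rw [smul_add]; exact Submodule.add_mem _ hx hy
  · intro c x _ hx
    show f • (c • x) ∈ _
    rw [smul_comm]; exact Submodule.smul_mem _ _ hx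

lemma E_of_fin (i : Fin r) : E F r (i : ℕ) = Pi.single i (1 : Polynomial F) := by
  rw [E, dif_pos i.2]

lemma pair_mem_spanMS (f : Polynomial F) (i j : Fin r) :
    f • ((Pi.single i 1 : Fin r → Polynomial F) ⊗ₜ[Polynomial F]
        (Pi.single j 1 : Fin r → Polynomial F) -
      (Pi.single j 1 : Fin r → Polynomial F) ⊗ₜ[Polynomial F]
        (Pi.single i 1 : Fin r → Polynomial F)) ∈ Submodule.span F (MS F r) := by
  rcases lt_trichotomy (i : ℕ) (j : ℕ) with h | h | h
  · have : (Pi.single i 1 : Fin r → Polynomial F) ⊗ₜ[Polynomial F]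
        (Pi.single j 1 : Fin r → Polynomial F) -
      (Pi.single j 1 : Fin r → Polynomial F) ⊗ₜ[Polynomial F]
        (Pi.single i 1 : Fin r → Polynomial F) = wedge F r (i : ℕ) (j : ℕ) := by
      rw [wedge, E_of_fin, E_of_fin]
    rw [this, ← mono_zero]
    exact smul_mem_spanMS f (Submodule.subset_span ⟨0, i, j, h, j.2, rfl⟩)
  · have hij : i = j := Fin.ext h
    rw [hij, sub_self, smul_zero]
    exact Submodule.zero_mem _
  · have : (Pi.single i 1 : Fin r → Polynomial F) ⊗ₜ[Polynomial F]
        (Pi.single j 1 : Fin r → Polynomial F) -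
      (Pi.single j 1 : Fin r → Polynomial F) ⊗ₜ[Polynomial F]
        (Pi.single i 1 : Fin r → Polynomial F) = - wedge F r (j : ℕ) (i : ℕ) := by
      rw [wedge, E_of_fin, E_of_fin]; abel
    rw [this, smul_neg, ← mono_zero]
    exact Submodule.neg_mem _ (smul_mem_spanMS f (Submodule.subset_span ⟨0, j, i, h, i.2, rfl⟩))

lemma pi_sum_single (u : Fin r → Polynomial F) :
    u = ∑ i, u i • (Pi.single i 1 : Fin r → Polynomial F) := by
  conv_lhs => rw [← Finset.univ_sum_single u]
  refine Finset.sum_congr rfl fun i _ => ?_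
  rw [← Pi.single_smul, smul_eq_mul, mul_one]

lemma tmul_expand (u v : Fin r → Polynomial F) :
    u ⊗ₜ[Polynomial F] v = ∑ i, ∑ j, (u i * v j) •
      ((Pi.single i 1 : Fin r → Polynomial F) ⊗ₜ[Polynomial F]
        (Pi.single j 1 : Fin r → Polynomial F)) := by
  conv_lhs => rw [pi_sum_single u, pi_sum_single v]
  rw [sum_tmul]
  refine Finset.sum_congr rfl fun i _ => ?_
  rw [tmul_sum]
  refine Finset.sum_congr rfl fun j _ => ?_
  rw [← smul_tmul', tmul_smul, smul_smul]

lemma gens_mem_spanMS (u v : Fin r → Polynomial F) :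
    u ⊗ₜ[Polynomial F] v - v ⊗ₜ[Polynomial F] u ∈ Submodule.span F (MS F r) := by
  rw [tmul_expand u v, tmul_expand v u]
  have hswap : ∑ i, ∑ j, (v i * u j) •
      ((Pi.single i 1 : Fin r → Polynomial F) ⊗ₜ[Polynomial F]
        (Pi.single j 1 : Fin r → Polynomial F)) =
      ∑ i, ∑ j, (u i * v j) •
      ((Pi.single j 1 : Fin r → Polynomial F) ⊗ₜ[Polynomial F]
        (Pi.single i 1 : Fin r → Polynomial F)) := by
    rw [Finset.sum_comm]
    refine Finset.sum_congr rfl fun i _ => Finset.sum_congr rfl fun j _ => ?_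
    rw [mul_comm]
  rw [hswap, ← Finset.sum_sub_distrib]
  refine Submodule.sum_mem _ fun i _ => ?_
  rw [← Finset.sum_sub_distrib]
  refine Submodule.sum_mem _ fun j _ => ?_
  have := pair_mem_spanMS (F := F) (r := r) (u i * v j) i j
  rwa [smul_sub] at this

lemma MS_le_spanGens :
    MS F r ⊆ (Submodule.span (Polynomial F)
      {x : (Fin r → Polynomial F) ⊗[Polynomial F] (Fin r → Polynomial F) |
        ∃ a b : Fin r → Polynomial F,
          x = a ⊗ₜ[Polynomial F] b - b ⊗ₜ[Polynomial F] a} :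
      Set ((Fin r → Polynomial F) ⊗[Polynomial F] (Fin r → Polynomial F))) := by
  rintro x ⟨n, a, b, hab, hbr, rfl⟩
  rw [mono]
  exact Submodule.smul_mem _ _ (Submodule.subset_span ⟨E F r a, E F r b, rfl⟩)

end spanstuff

end AltSqAux
end

open AltSqAux in
/-- **The antisymmetrized basis is a free `F[τ]`-basis of `Alt²` of the `t`-motive of `φ`.**
Model the `t`-motive of the rank-`r` Drinfeld module `φ_t = θ + κ₁τ + ⋯ + κ_rτ^r`
(`r ≥ 2`) as `M = F[t]^r` with its semilinear map `τ`, and let `τ₂` denote the induced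
map on `M ⊗_{F[t]} M`.  With `m_i = τ^i(b₁)` and `ζ_i = ½(m₀⊗m_i - m_i⊗m₀)` for
`1 ≤ i ≤ r - 1`, the family `τ₂^k(ζ_i)` (`k ∈ ℕ`, `1 ≤ i ≤ r - 1`) is `F`-linearly
independent and its `F`-span equals the `F[t]`-submodule `Alt²M` spanned by all
`a⊗b - b⊗a`. -/
theorem altSquare_tMotive_basis
    (p : ℕ) [Fact p.Prime] (hp : p ≠ 2)
    (q : ℕ) (hq : ∃ n : ℕ, 0 < n ∧ q = p ^ n)
    (F : Type) [Field F] [CharP F p]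
    (r : ℕ) (hr : 2 ≤ r)
    (θ : F) (κ : Fin r → F) (hκr : κ ⟨r - 1, by omega⟩ ≠ 0)
    -- the q-power Frobenius on F
    (φq : F →+* F) (hφq : ∀ x : F, φq x = x ^ q)
    -- the semilinear map τ on M = F[t]^r, determined by its values on the basis
    (τ : (Fin r → Polynomial F) → (Fin r → Polynomial F))
    (hτadd : ∀ x y, τ (x + y) = τ x + τ y)
    (hτsemi : ∀ (f : Polynomial F) (v : Fin r → Polynomial F),
      τ (f • v) = (f.map φq) • τ v)
    (hτstep : ∀ i : Fin r, ∀ h : (i : ℕ) + 1 < r,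
      τ (Pi.single i (1 : Polynomial F)) = Pi.single (⟨(i : ℕ) + 1, h⟩ : Fin r) 1)
    (hτlast : τ (Pi.single (⟨r - 1, by omega⟩ : Fin r) (1 : Polynomial F)) =
      (κ ⟨r - 1, by omega⟩)⁻¹ •
        ((Polynomial.X - Polynomial.C θ) •
            (Pi.single (⟨0, by omega⟩ : Fin r) 1 : Fin r → Polynomial F)
          - ∑ j : Fin (r - 1),
              Polynomial.C (κ ⟨(j : ℕ), by have := j.2; omega⟩) •
                (Pi.single (⟨(j : ℕ) + 1, by have := j.2; omega⟩ : Fin r) 1 :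
                  Fin r → Polynomial F)))
    -- the induced map on M ⊗_{F[t]} M
    (τ₂ : (Fin r → Polynomial F) ⊗[Polynomial F] (Fin r → Polynomial F) →
          (Fin r → Polynomial F) ⊗[Polynomial F] (Fin r → Polynomial F))
    (hτ₂add : ∀ x y, τ₂ (x + y) = τ₂ x + τ₂ y)
    (hτ₂tmul : ∀ a b : Fin r → Polynomial F,
      τ₂ (a ⊗ₜ[Polynomial F] b) = τ a ⊗ₜ[Polynomial F] τ b)
    -- m₀ = b₁ and the antisymmetrized vectors ζ_1, …, ζ_{r-1}
    (m0 : Fin r → Polynomial F) (hm0 : m0 = Pi.single (⟨0, by omega⟩ : Fin r) 1)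
    (ζ : Fin (r - 1) →
      (Fin r → Polynomial F) ⊗[Polynomial F] (Fin r → Polynomial F))
    (hζ : ∀ i : Fin (r - 1),
      ζ i = (2 : F)⁻¹ • (m0 ⊗ₜ[Polynomial F] (τ^[(i : ℕ) + 1] m0)
        - (τ^[(i : ℕ) + 1] m0) ⊗ₜ[Polynomial F] m0))
    (fam : ℕ × Fin (r - 1) →
      (Fin r → Polynomial F) ⊗[Polynomial F] (Fin r → Polynomial F))
    (hfam : ∀ (k : ℕ) (i : Fin (r - 1)), fam (k, i) = τ₂^[k] (ζ i)) :
    LinearIndependent F fam ∧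
      (Submodule.span F (Set.range fam) :
          Set ((Fin r → Polynomial F) ⊗[Polynomial F] (Fin r → Polynomial F)))
        = (Submodule.span (Polynomial F)
            {x : (Fin r → Polynomial F) ⊗[Polynomial F] (Fin r → Polynomial F) |
              ∃ a b : Fin r → Polynomial F,
                x = a ⊗ₜ[Polynomial F] b - b ⊗ₜ[Polynomial F] a} :
          Set ((Fin r → Polynomial F) ⊗[Polynomial F] (Fin r → Polynomial F))) := by
    classical
  have h2 : (2 : F) ≠ 0 := by
    intro h
    have hdvd : p ∣ 2 := (CharP.cast_eq_zero_iff F p 2).mp (by exact_mod_cast h)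
    have hple : p ≤ 2 := Nat.le_of_dvd (by norm_num) hdvd
    have hp2 : 2 ≤ p := (Fact.out : p.Prime).two_le
    omega
  have hE0 : E F r 0 = Pi.single (⟨0, by omega⟩ : Fin r) (1 : Polynomial F) := by
    rw [E, dif_pos (by omega : 0 < r)]
  have hEr : E F r (r - 1) = Pi.single (⟨r - 1, by omega⟩ : Fin r) (1 : Polynomial F) := by
    rw [E, dif_pos (by omega : r - 1 < r)]
  set κc : Fin (r - 1) → F := fun j => κ ⟨(j : ℕ), by have := j.2; omega⟩ with hκc
  have hlastE : τ (E F r (r - 1)) =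
      (κ ⟨r - 1, by omega⟩)⁻¹ • ((Polynomial.X - Polynomial.C θ) • E F r 0 -
        ∑ j : Fin (r - 1), Polynomial.C (κc j) • E F r ((j : ℕ) + 1)) := by
    rw [hEr, hE0]
    rw [show (∑ j : Fin (r - 1), Polynomial.C (κc j) • E F r ((j : ℕ) + 1))
        = ∑ j : Fin (r - 1), Polynomial.C (κ ⟨(j : ℕ), by have := j.2; omega⟩) •
            (Pi.single (⟨(j : ℕ) + 1, by have := j.2; omega⟩ : Fin r) 1 :
              Fin r → Polynomial F)
      from Finset.sum_congr rfl fun j _ => by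
        rw [E, dif_pos (by have := j.2; omega : (j : ℕ) + 1 < r)]]
    exact hτlast
  have hiter : ∀ j, j < r → τ^[j] m0 = E F r j := by
    intro j
    induction j with
    | zero => intro _; rw [Function.iterate_zero_apply, hm0, hE0]
    | succ j ih =>
        intro hj
        rw [Function.iterate_succ_apply', ih (by omega), tau_E_step τ hτstep j hj]
  have hζ' : ∀ i : Fin (r - 1), ζ i = (2 : F)⁻¹ • mono F r 0 0 ((i : ℕ) + 1) := by
    intro i
    have hi : (i : ℕ) + 1 < r := by have := i.2; omega
    rw [hζ i, hiter ((i : ℕ) + 1) hi, hm0, ← hE0, mono_zero, wedge]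
  have hkey : ∀ (k : ℕ) (i : Fin (r - 1)), ∃ c : F, c ≠ 0 ∧
      ∃ z ∈ SubN F r (2 * k + ((i : ℕ) + 1)),
        fam (k, i) = c • mono F r (posn r ((i : ℕ) + 1) k).1
          (posn r ((i : ℕ) + 1) k).2.1 (posn r ((i : ℕ) + 1) k).2.2 + z := by
    intro k i
    rw [hfam, hζ' i]
    exact key_invariant q φq τ τ₂ (κ ⟨r - 1, by omega⟩) θ κc hr h2 hκr hφq hτsemi
      hτstep hlastE hτ₂add hτ₂tmul ((i : ℕ) + 1) (by omega) (by have := i.2; omega) k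
  constructor
  · -- linear independence
    rw [linearIndependent_iff']
    intro s g hsum
    by_contra hex
    push_neg at hex
    obtain ⟨j₀, hj₀s, hgj₀⟩ := hex
    set T := s.filter (fun j => g j ≠ 0) with hT
    have hTne : T.Nonempty := ⟨j₀, Finset.mem_filter.mpr ⟨hj₀s, hgj₀⟩⟩
    obtain ⟨m, hmT, hmax⟩ :=
      T.exists_max_image (fun j => 2 * j.1 + ((j.2 : ℕ) + 1)) hTne
    have hmS : m ∈ s := (Finset.mem_filter.mp hmT).1
    have hgm : g m ≠ 0 := (Finset.mem_filter.mp hmT).2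
    have hdm1 : 1 ≤ (m.2 : ℕ) + 1 := by omega
    have hdmr : (m.2 : ℕ) + 1 < r := by have := m.2.2; omega
    obtain ⟨hPab, hPbr, hPF, -⟩ := posn_pinv hr hdm1 hdmr m.1
    set P := posn r ((m.2 : ℕ) + 1) m.1 with hPdef
    set φc := coordF F r P.1 ⟨P.2.1, lt_trans hPab hPbr⟩ ⟨P.2.2, hPbr⟩ with hφc
    have hzero : ∑ j ∈ s, g j * φc (fam j) = 0 := by
      have h0 : φc (∑ j ∈ s, g j • fam j) = 0 := by rw [hsum, map_zero]
      rw [map_sum] at h0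
      simpa only [map_smul, smul_eq_mul] using h0
    obtain ⟨c, hc, z, hz, heqm⟩ := hkey m.1 m.2
    have heqm' : fam m = c • mono F r P.1 P.2.1 P.2.2 + z := heqm
    have hm_eval : φc (fam m) = c := by
      rw [heqm', map_add, map_smul,
        coordF_mono_self P.1 P.2.1 P.2.2 hPab hPbr,
        SubN_coord_zero hPab hPbr (by omega) hz]
      simp
    have hothers : ∀ j ∈ s, j ≠ m → g j * φc (fam j) = 0 := by
      intro j hjs hjm
      by_cases hgj : g j = 0
      · rw [hgj, zero_mul]
      · have hjT : j ∈ T := Finset.mem_filter.mpr ⟨hjs, hgj⟩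
        have hdj1 : 1 ≤ (j.2 : ℕ) + 1 := by omega
        have hdjr : (j.2 : ℕ) + 1 < r := by have := j.2.2; omega
        obtain ⟨hQab, hQbr, hQF, -⟩ := posn_pinv hr hdj1 hdjr j.1
        obtain ⟨c', hc', z', hz', heqj⟩ := hkey j.1 j.2
        have heqj' : fam j = c' • mono F r (posn r ((j.2 : ℕ) + 1) j.1).1
            (posn r ((j.2 : ℕ) + 1) j.1).2.1 (posn r ((j.2 : ℕ) + 1) j.1).2.2 + z' := heqj
        have hmax_j := hmax j hjT
        have hz0 : φc z' = 0 := SubN_coord_zero hPab hPbr (by omega) hz'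
        have hne : (P.1, P.2.1, P.2.2) ≠ ((posn r ((j.2 : ℕ) + 1) j.1).1,
            (posn r ((j.2 : ℕ) + 1) j.1).2.1, (posn r ((j.2 : ℕ) + 1) j.1).2.2) := by
          intro hEq
          have hPP : posn r ((m.2 : ℕ) + 1) m.1 = posn r ((j.2 : ℕ) + 1) j.1 := by
            rw [Prod.ext_iff, Prod.ext_iff] at hEq ⊢
            exact hEq
          obtain ⟨hde, hke⟩ := posn_inj hr hdm1 hdmr hdj1 hdjr hPP
          apply hjm
          have h1 : j.1 = m.1 := hke.symm
          have h2' : j.2 = m.2 := Fin.ext (by omega)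
          exact Prod.ext h1 h2'
        have hmono0 : φc (mono F r (posn r ((j.2 : ℕ) + 1) j.1).1
            (posn r ((j.2 : ℕ) + 1) j.1).2.1 (posn r ((j.2 : ℕ) + 1) j.1).2.2) = 0 :=
          coordF_mono_ne P.1 P.2.1 P.2.2 _ _ _ hPab hPbr hQab hQbr hne
        rw [heqj', map_add, map_smul, hmono0, hz0]
        simp
    have hsingle : ∑ j ∈ s, g j * φc (fam j) = g m * φc (fam m) :=
      Finset.sum_eq_single_of_mem m hmS (fun j hj hne => hothers j hj hne)
    rw [hsingle, hm_eval] at hzero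
    exact mul_ne_zero hgm hc hzero
  · -- span equality
    have hmono_mem : ∀ N n a b, a < b → b < r → n * r + a + b < N →
        mono F r n a b ∈ Submodule.span F (Set.range fam) := by
      intro N
      induction N using Nat.strong_induction_on with
      | _ N ih =>
        intro n a b hab hbr hF
        obtain ⟨k, d, hd1, hdr, hpos⟩ := posn_surj hr hab hbr
        set i : Fin (r - 1) := ⟨d - 1, by omega⟩ with hi_def
        have hi : (i : ℕ) + 1 = d := by simp [hi_def]; omega
        obtain ⟨c, hc, z, hz, heq⟩ := hkey k i
        rw [hi, hpos] at heq
        have heq' : fam (k, i) = c • mono F r n a b + z := heq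
        obtain ⟨-, -, hFv, -⟩ := posn_pinv hr hd1 hdr (d := d) k
        rw [hpos] at hFv
        have hFv' : n * r + a + b = 2 * k + d := hFv
        have hz' : z ∈ SubN F r (n * r + a + b) := by
          rw [hi] at hz
          rwa [hFv']
        have hzspan : z ∈ Submodule.span F (Set.range fam) := by
          refine Submodule.span_le.mpr ?_ hz'
          rintro x ⟨n', a', b', h1, h2', h3, rfl⟩
          exact ih (n * r + a + b) hF n' a' b' h1 h2' h3
        have hmono_eq : mono F r n a b = c⁻¹ • (fam (k, i) - z) := by
          rw [heq', add_sub_cancel_right, smul_smul, inv_mul_cancel₀ hc, one_smul]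
        rw [hmono_eq]
        exact Submodule.smul_mem _ _ (Submodule.sub_mem _
          (Submodule.subset_span ⟨(k, i), rfl⟩) hzspan)
    have hspan1 : Submodule.span F (Set.range fam) = Submodule.span F (MS F r) := by
      apply le_antisymm
      · rw [Submodule.span_le]
        rintro x ⟨⟨k, i⟩, rfl⟩
        obtain ⟨c, hc, z, hz, heq⟩ := hkey k i
        have heq' : fam (k, i) = c • mono F r (posn r ((i : ℕ) + 1) k).1
            (posn r ((i : ℕ) + 1) k).2.1 (posn r ((i : ℕ) + 1) k).2.2 + z := heq
        rw [heq']
        obtain ⟨hab, hbr, -, -⟩ :=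
          posn_pinv hr (by omega : 1 ≤ (i : ℕ) + 1) (by have := i.2; omega) k
        exact Submodule.add_mem _ (Submodule.smul_mem _ _ (Submodule.subset_span
          ⟨_, _, _, hab, hbr, rfl⟩)) (SubN_le_spanMS _ hz)
      · rw [Submodule.span_le]
        rintro x ⟨n, a, b, hab, hbr, rfl⟩
        exact hmono_mem (n * r + a + b + 1) n a b hab hbr (by omega)
    rw [hspan1]
    apply Set.Subset.antisymm
    · intro x hx
      have hle : Submodule.span F (MS F r) ≤
          (Submodule.span (Polynomial F)
            {x : (Fin r → Polynomial F) ⊗[Polynomial F] (Fin r → Polynomial F) |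
              ∃ a b : Fin r → Polynomial F,
                x = a ⊗ₜ[Polynomial F] b - b ⊗ₜ[Polynomial F] a}).restrictScalars F :=
        Submodule.span_le.mpr MS_le_spanGens
      exact hle hx
    · intro x hx
      refine Submodule.span_induction
        (p := fun x _ => x ∈ Submodule.span F (MS F r)) ?_ ?_ ?_ ?_ hx
      · rintro y ⟨u, v, rfl⟩; exact gens_mem_spanMS u v
      · exact Submodule.zero_mem _
      · intro a b _ _ ha hb; exact Submodule.add_mem _ ha hb
      · intro f y _ hy; exact smul_mem_spanMS f hy
end

section
/- Schur values at inverted variables reverse the index: let n ≥ 2, let k_1, …, k_{n−1} be nonnegative integers, and let x_1, …, x_n be pairwise distinct nonzero elements of a field F. Then (x_1 x_2 ⋯ x_n)^{k_1 + ⋯ + k_{n−1}} · S_{k_1, …, k_{n−1}}(x_1^{−1}, …, x_n^{−1}) = S_{k_{n−1}, …, k_1}(x_1, …, x_n). -/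
/-- The `S`-type Schur value `S_{k₁,…,k_{n-1}}(x) = V(x)⁻¹ · det A`, where the rows of
`A` are `x_j^{K_i + n - i}` with partial sums `K_i = k_i + ⋯ + k_{n-1}` for
`1 ≤ i ≤ n - 1` and the last row is `(1, …, 1)`, and `V(x) = ∏_{i<j} (x_i - x_j)` is the
Vandermonde determinant. -/
noncomputable def schurS (F : Type) [Field F] (n : ℕ) (k : Fin (n - 1) → ℕ)
    (x : Fin n → F) : F :=
  (∏ i : Fin n, ∏ j : Fin n, if i < j then x i - x j else 1)⁻¹ *
    Matrix.det (Matrix.of fun i j : Fin n =>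
      if (i : ℕ) < n - 1 then
        x j ^ ((∑ s ∈ Finset.univ.filter fun s : Fin (n - 1) => (i : ℕ) ≤ (s : ℕ), k s)
          + (n - 1 - (i : ℕ)))
      else 1)

open Finset

lemma prod_if_lt_eq {F : Type} [CommMonoid F] {n : ℕ} (f : Fin n → Fin n → F) :
    (∏ i : Fin n, ∏ j : Fin n, if i < j then f i j else 1)
      = ∏ i : Fin n, ∏ j ∈ Ioi i, f i j := by
  refine Finset.prod_congr rfl fun i _ => ?_
  rw [← Finset.prod_filter, Finset.filter_lt_eq_Ioi]

lemma sign_rev_eq (n : ℕ) :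
    ((Equiv.Perm.sign (Fin.revPerm : Equiv.Perm (Fin n))) : ℤ)
      = ∏ i : Fin n, ∏ j ∈ Ioi i, (-1 : ℤ) := by
  set v : Fin n → ℚ := fun i => (i : ℚ) with hv
  have hperm := Matrix.det_permute (Fin.revPerm) (Matrix.vandermonde v)
  have h2 : (Matrix.vandermonde v).submatrix Fin.revPerm id
      = Matrix.vandermonde (fun i => v i.rev) := by
    ext i j; simp [Matrix.vandermonde]
  rw [h2, Matrix.det_vandermonde, Matrix.det_vandermonde] at hperm
  have h3 : ∀ i : Fin n, ∀ j ∈ Ioi i, v j.rev - v i.rev = (-1) * (v j - v i) := by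
    intro i j _
    have hi : (i : ℕ) < n := i.isLt
    have hj' : (j : ℕ) < n := j.isLt
    simp only [hv, Fin.val_rev]
    rw [Nat.cast_sub (by omega), Nat.cast_sub (by omega)]
    push_cast; ring
  rw [Finset.prod_congr rfl fun i _ => Finset.prod_congr rfl (h3 i)] at hperm
  simp only [Finset.prod_mul_distrib] at hperm
  have hVne : (∏ i : Fin n, ∏ j ∈ Ioi i, (v j - v i)) ≠ 0 := by
    refine Finset.prod_ne_zero_iff.mpr fun i _ => Finset.prod_ne_zero_iff.mpr fun j hj => ?_
    have hij : i < j := Finset.mem_Ioi.mp hj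
    have : (i : ℚ) ≠ (j : ℚ) := by
      simp only [Ne, Nat.cast_inj]
      exact fun h => absurd (Fin.ext h : i = j) hij.ne
    simp only [hv]
    exact sub_ne_zero.mpr (Ne.symm this)
  have h4 := mul_right_cancel₀ hVne hperm
  have hcast : ((∏ i : Fin n, ∏ j ∈ Ioi i, (-1 : ℤ) : ℤ) : ℚ)
      = ∏ i : Fin n, ∏ j ∈ Ioi i, (-1 : ℚ) := by push_cast; rfl
  exact_mod_cast h4.symm.trans hcast.symm

lemma prod_pairs_mul {F : Type} [CommMonoid F] {n : ℕ} (x : Fin n → F) :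
    (∏ i : Fin n, ∏ _j ∈ Ioi i, x i) * (∏ i : Fin n, ∏ j ∈ Ioi i, x j)
      = (∏ i : Fin n, x i) ^ (n - 1) := by
  have h1 : ∀ i : Fin n, ∏ _j ∈ Ioi i, x i = x i ^ (n - 1 - (i : ℕ)) := by
    intro i; rw [Finset.prod_const, Fin.card_Ioi]
  have h2 : (∏ i : Fin n, ∏ j ∈ Ioi i, x j) = ∏ j : Fin n, x j ^ (j : ℕ) := by
    have h0 : ∀ i : Fin n, (∏ j ∈ Ioi i, x j) = ∏ j : Fin n, if i < j then x j else 1 := by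
      intro i; rw [← Finset.prod_filter, Finset.filter_lt_eq_Ioi]
    rw [Finset.prod_congr rfl fun i _ => h0 i, Finset.prod_comm]
    refine Finset.prod_congr rfl fun j _ => ?_
    rw [← Finset.prod_filter, Finset.filter_gt_eq_Iio, Finset.prod_const, Fin.card_Iio]
  rw [Finset.prod_congr rfl fun i _ => h1 i, h2, ← Finset.prod_mul_distrib, ← Finset.prod_pow]
  refine Finset.prod_congr rfl fun i _ => ?_
  rw [← pow_add]
  congr 1
  have := i.isLt
  omega

lemma sum_rev_filter {n : ℕ} (k : Fin (n-1) → ℕ) (i : Fin n) :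
    ∑ s ∈ univ.filter (fun s : Fin (n-1) => n - ((i:ℕ)+1) ≤ (s:ℕ)), k s.rev
      + ∑ s ∈ univ.filter (fun s : Fin (n-1) => (i:ℕ) ≤ (s:ℕ)), k s = ∑ s, k s := by
  have hrev : ∑ s ∈ univ.filter (fun s : Fin (n-1) => n - ((i:ℕ)+1) ≤ (s:ℕ)), k s.rev
      = ∑ s ∈ univ.filter (fun s : Fin (n-1) => ¬ ((i:ℕ) ≤ (s:ℕ))), k s := by
    refine Finset.sum_nbij' (fun s => s.rev) (fun s => s.rev) ?_ ?_ ?_ ?_ ?_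
    · intro a ha
      simp only [mem_filter, mem_univ, true_and, Fin.val_rev] at ha ⊢
      have := a.isLt; have := i.isLt; omega
    · intro a ha
      simp only [mem_filter, mem_univ, true_and, Fin.val_rev] at ha ⊢
      have := a.isLt; have := i.isLt; omega
    · intro a _; exact Fin.rev_rev a
    · intro a _; exact Fin.rev_rev a
    · intro a _; rfl
  rw [hrev, add_comm, Finset.sum_filter_add_sum_filter_not]

/-- **Schur values at inverted variables reverse the index:** for `n ≥ 2`, nonnegative
integers `k₁, …, k_{n-1}`, and pairwise distinct nonzero `x₁, …, x_n` in a field `F`,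
`(x₁x₂⋯x_n)^{k₁+⋯+k_{n-1}} · S_{k₁,…,k_{n-1}}(x₁⁻¹,…,x_n⁻¹) = S_{k_{n-1},…,k₁}(x₁,…,x_n)`. -/
theorem schurS_inv_rev
    (F : Type) [Field F] (n : ℕ) (hn : 2 ≤ n)
    (k : Fin (n - 1) → ℕ)
    (x : Fin n → F) (hx : Function.Injective x) (hx0 : ∀ i, x i ≠ 0) :
    (∏ i, x i) ^ (∑ i, k i) * schurS F n k (fun i => (x i)⁻¹)
      = schurS F n (fun i => k i.rev) x := by
  unfold schurS
  rw [prod_if_lt_eq, prod_if_lt_eq]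
  set T := ∑ i, k i with hT
  set M := T + (n - 1) with hM
  set Q := ∏ i, x i with hQ
  have hQne : Q ≠ 0 := Finset.prod_ne_zero_iff.mpr fun i _ => hx0 i
  set V := ∏ i : Fin n, ∏ j ∈ Ioi i, (x i - x j) with hV
  have hVne : V ≠ 0 := by
    refine Finset.prod_ne_zero_iff.mpr fun i _ => Finset.prod_ne_zero_iff.mpr fun j hj => ?_
    exact sub_ne_zero.mpr fun h => (Finset.mem_Ioi.mp hj).ne (hx h)
  set S := ∏ i : Fin n, ∏ j ∈ Ioi i, (-1 : F) with hS
  have hS2 : S * S = 1 := by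
    rw [hS, ← Finset.prod_mul_distrib]
    refine Finset.prod_eq_one fun i _ => ?_
    rw [← Finset.prod_mul_distrib]
    exact Finset.prod_eq_one fun j _ => by ring
  have hSne : S ≠ 0 := fun h => by rw [h, mul_zero] at hS2; exact zero_ne_one hS2
  have hVi : (∏ i : Fin n, ∏ j ∈ Ioi i, ((x i)⁻¹ - (x j)⁻¹)) = S * (Q ^ (n-1))⁻¹ * V := by
    have hpt : ∀ i j : Fin n, (x i)⁻¹ - (x j)⁻¹ = (-1) * (x i * x j)⁻¹ * (x i - x j) := by
      intro i j
      rw [inv_sub_inv (hx0 i) (hx0 j), div_eq_mul_inv]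
      ring
    rw [Finset.prod_congr rfl fun i _ => Finset.prod_congr rfl fun j _ => hpt i j]
    simp only [Finset.prod_mul_distrib, Finset.prod_inv_distrib]
    rw [prod_pairs_mul, ← hQ, ← hS, ← hV]
  have hsignF : ((Equiv.Perm.sign (Fin.revPerm : Equiv.Perm (Fin n)) : ℤ) : F) = S := by
    rw [sign_rev_eq n]
    push_cast
    rw [hS]
  have hdet : Q ^ M *
      (Matrix.of fun i j : Fin n =>
        if (i : ℕ) < n - 1 then
          (x j)⁻¹ ^ ((∑ s ∈ Finset.univ.filter fun s : Fin (n - 1) => (i : ℕ) ≤ (s : ℕ), k s)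
            + (n - 1 - (i : ℕ)))
        else 1).det
      = S * (Matrix.of fun i j : Fin n =>
        if (i : ℕ) < n - 1 then
          x j ^ ((∑ s ∈ Finset.univ.filter fun s : Fin (n - 1) => (i : ℕ) ≤ (s : ℕ), k s.rev)
            + (n - 1 - (i : ℕ)))
        else 1).det := by
    have h1 := Matrix.det_mul_row (fun j : Fin n => x j ^ M)
      (Matrix.of fun i j : Fin n =>
        if (i : ℕ) < n - 1 then
          (x j)⁻¹ ^ ((∑ s ∈ Finset.univ.filter fun s : Fin (n - 1) => (i : ℕ) ≤ (s : ℕ), k s)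
            + (n - 1 - (i : ℕ)))
        else 1)
    have hmat : (Matrix.of fun i j : Fin n => (fun j : Fin n => x j ^ M) j *
        (Matrix.of fun i j : Fin n =>
          if (i : ℕ) < n - 1 then
            (x j)⁻¹ ^ ((∑ s ∈ Finset.univ.filter fun s : Fin (n - 1) => (i : ℕ) ≤ (s : ℕ), k s)
              + (n - 1 - (i : ℕ)))
          else 1) i j)
        = (Matrix.of fun i j : Fin n =>
          if (i : ℕ) < n - 1 then
            x j ^ ((∑ s ∈ Finset.univ.filter fun s : Fin (n - 1) => (i : ℕ) ≤ (s : ℕ), k s.rev)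
              + (n - 1 - (i : ℕ)))
          else 1).submatrix Fin.revPerm id := by
      ext i j
      simp only [Matrix.of_apply, Matrix.submatrix_apply, id_eq, Fin.revPerm_apply]
      have hKle : (∑ s ∈ Finset.univ.filter fun s : Fin (n - 1) => (i : ℕ) ≤ (s : ℕ), k s) ≤ T := by
        rw [hT]
        exact Finset.sum_le_sum_of_subset (Finset.filter_subset _ _)
      have hpow : ∀ e : ℕ, e ≤ M → x j ^ M * (x j)⁻¹ ^ e = x j ^ (M - e) := by
        intro e he
        rw [inv_pow, ← pow_sub₀ _ (hx0 j) he]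
      have hin : (i : ℕ) < n := i.isLt
      by_cases hi : (i : ℕ) < n - 1
      · rw [if_pos hi]
        rw [hpow _ (by rw [hM]; exact add_le_add hKle (Nat.sub_le _ _))]
        by_cases hi0 : (i : ℕ) = 0
        · have hcond : ¬ ((i.rev : ℕ) < n - 1) := by
            rw [Fin.val_rev]; omega
          rw [if_neg hcond]
          have hfil : (Finset.univ.filter fun s : Fin (n - 1) => (i : ℕ) ≤ (s : ℕ)) = univ := by
            refine Finset.filter_true_of_mem fun s _ => ?_
            omega
          rw [hfil, ← hT]
          have : M - (T + (n - 1 - (i : ℕ))) = 0 := by rw [hM]; omega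
          rw [this, pow_zero]
        · have hcond : ((i.rev : ℕ) < n - 1) := by
            rw [Fin.val_rev]; omega
          rw [if_pos hcond]
          congr 1
          have hsum := sum_rev_filter k i
          rw [← hT] at hsum
          rw [Fin.val_rev]
          omega
      · rw [if_neg hi, mul_one]
        have hieq : (i : ℕ) = n - 1 := by omega
        have hcond : ((i.rev : ℕ) < n - 1) := by
          rw [Fin.val_rev]; omega
        rw [if_pos hcond]
        have hrev0 : (i.rev : ℕ) = 0 := by rw [Fin.val_rev]; omega
        rw [hrev0]
        have hfil : (Finset.univ.filter fun s : Fin (n - 1) => 0 ≤ (s : ℕ)) = univ :=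
          Finset.filter_true_of_mem fun s _ => Nat.zero_le _
        rw [hfil]
        have hsum : ∑ s : Fin (n-1), k s.rev = T := by
          rw [hT]
          exact Fintype.sum_equiv Fin.revPerm _ _ fun s => rfl
        rw [hsum]
        congr 1
    rw [hmat, Matrix.det_permute] at h1
    rw [hQ, ← Finset.prod_pow, ← h1, hsignF]
  set dA := (Matrix.of fun i j : Fin n =>
        if (i : ℕ) < n - 1 then
          (x j)⁻¹ ^ ((∑ s ∈ Finset.univ.filter fun s : Fin (n - 1) => (i : ℕ) ≤ (s : ℕ), k s)
            + (n - 1 - (i : ℕ)))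
        else 1).det with hdA
  set dB := (Matrix.of fun i j : Fin n =>
        if (i : ℕ) < n - 1 then
          x j ^ ((∑ s ∈ Finset.univ.filter fun s : Fin (n - 1) => (i : ℕ) ≤ (s : ℕ), k s.rev)
            + (n - 1 - (i : ℕ)))
        else 1).det with hdB
  rw [hVi]
  have hQM : Q ^ M ≠ 0 := pow_ne_zero _ hQne
  have hdAeq : dA = (Q ^ M)⁻¹ * (S * dB) := by
    field_simp
    linear_combination hdet
  rw [hdAeq, hM]
  field_simp
  ring_nf
end
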